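/- arXiv:2310.00345 — 9 statements merged into one kernel-verified Lean document; each statement's English description precedes it below -/
import Mathlib

section
/- If a finite group G is the product of two abelian subgroups A and B, then the derived subgroup G' of G is abelian (i.e., G is metabelian). -/
/-!
Itô's argument. As `G = A * B = B * A`, conjugating a mixed commutator `⁅a, b⁆` (`a ∈ A`, `b ∈ B`)
by `c ∈ A` only replaces `b` by the `B`-factor `b'` of `c⁻¹ * b * c`, which does not depend on `a`;
symmetrically, conjugating by `d ∈ B` only replaces `a`. Conjugating `⁅a, b⁆` by `d * c` and by
`c * d` therefore leads to the same `⁅a', b'⁆`, so `⁅a, b⁆` commutes with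
`(c * d) * (d * c)⁻¹ = ⁅c, d⁆`, and `⁅A, B⁆` is abelian. Being normalized by `A` and `B`, it is
normal, and it contains `G'` since `A` and `B` are abelian and commute modulo `⁅A, B⁆`.
-/

open Pointwise

open scoped commutatorElement

section Group

variable {G : Type*} [Group G]

theorem commutatorElement_mul_right_of_commute {a c : G} (h : Commute a c) (b : G) :
    ⁅a, b * c⁆ = ⁅a, b⁆ := by
  simp only [commutatorElement_def, mul_inv_rev, mul_assoc, mul_right_inj]
  rw [← mul_assoc c, h.symm.inv_right.eq, mul_assoc, mul_inv_cancel_left]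

theorem commute_mul_inv_of_conj_eq {x u v : G} (h : v⁻¹ * x * v = u⁻¹ * x * u) :
    Commute x (u * v⁻¹) :=
  calc x * (u * v⁻¹) = u * (u⁻¹ * x * u) * v⁻¹ := by group
    _ = u * (v⁻¹ * x * v) * v⁻¹ := by rw [h]
    _ = u * v⁻¹ * x := by group

end Group

namespace Subgroup

variable {G : Type*} [Group G] {A B : Subgroup G}

theorem coe_mul_coe_comm_of_eq_univ (h : (A : Set G) * (B : Set G) = Set.univ) :
    (B : Set G) * (A : Set G) = Set.univ := by
  rw [← inv_coe_set (H := B), ← inv_coe_set (H := A), ← mul_inv_rev, h, Set.inv_univ]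

theorem sup_eq_top_of_coe_mul_eq_univ (h : (A : Set G) * (B : Set G) = Set.univ) :
    A ⊔ B = ⊤ := by
  rw [sup_eq_closure_mul, h, closure_univ]

theorem exists_conj_commutatorElement_eq_right (hA : ∀ x ∈ A, ∀ y ∈ A, x * y = y * x)
    (hBA : (B : Set G) * (A : Set G) = Set.univ) {c : G} (hc : c ∈ A) (g : G) :
    ∃ b' ∈ B, ∀ a ∈ A, c⁻¹ * ⁅a, g⁆ * c = ⁅a, b'⁆ := by
  obtain ⟨b', hb', a', ha', hdecomp⟩ : c⁻¹ * g * c ∈ (B : Set G) * (A : Set G) :=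
    hBA ▸ Set.mem_univ _
  refine ⟨b', hb', fun a ha => ?_⟩
  have hca : c⁻¹ * a * c = a := by rw [mul_assoc, hA a ha c hc, inv_mul_cancel_left]
  calc c⁻¹ * ⁅a, g⁆ * c = ⁅c⁻¹ * a * c, c⁻¹ * g * c⁆ := by
        simpa using conjugate_commutatorElement a g c⁻¹
    _ = ⁅a, b'⁆ := by
        rw [hca, ← hdecomp, commutatorElement_mul_right_of_commute (hA a ha a' ha')]

theorem exists_conj_commutatorElement_eq_left (hB : ∀ x ∈ B, ∀ y ∈ B, x * y = y * x)
    (hAB : (A : Set G) * (B : Set G) = Set.univ) {d : G} (hd : d ∈ B) (g : G) :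
    ∃ a' ∈ A, ∀ b ∈ B, d⁻¹ * ⁅g, b⁆ * d = ⁅a', b⁆ := by
  obtain ⟨a', ha', h⟩ := exists_conj_commutatorElement_eq_right hB hAB hd g
  refine ⟨a', ha', fun b hb => ?_⟩
  rw [← commutatorElement_inv, ← commutatorElement_inv b, ← h b hb]
  group

theorem commute_commutatorElement_commutatorElement (hA : ∀ x ∈ A, ∀ y ∈ A, x * y = y * x)
    (hB : ∀ x ∈ B, ∀ y ∈ B, x * y = y * x) (hAB : (A : Set G) * (B : Set G) = Set.univ)
    {a b c d : G} (ha : a ∈ A) (hb : b ∈ B) (hc : c ∈ A) (hd : d ∈ B) :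
    Commute ⁅a, b⁆ ⁅c, d⁆ := by
  obtain ⟨b', hb', hc'⟩ :=
    exists_conj_commutatorElement_eq_right hA (coe_mul_coe_comm_of_eq_univ hAB) hc b
  obtain ⟨a', ha', hd'⟩ := exists_conj_commutatorElement_eq_left hB hAB hd a
  have hdc : (d * c)⁻¹ * ⁅a, b⁆ * (d * c) = ⁅a', b'⁆ := by
    rw [← hc' a' ha', ← hd' b hb]; group
  have hcd : (c * d)⁻¹ * ⁅a, b⁆ * (c * d) = ⁅a', b'⁆ := by
    rw [← hd' b' hb', ← hc' a ha]; group
  simpa [commutatorElement_def, mul_assoc] using commute_mul_inv_of_conj_eq (hdc.trans hcd.symm)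

theorem isMulCommutative_commutator_of_coe_mul_eq_univ
    (hA : ∀ x ∈ A, ∀ y ∈ A, x * y = y * x) (hB : ∀ x ∈ B, ∀ y ∈ B, x * y = y * x)
    (hAB : (A : Set G) * (B : Set G) = Set.univ) : IsMulCommutative (⁅A, B⁆ : Subgroup G) := by
  rw [commutator_def]
  refine isMulCommutative_closure ?_
  rintro _ ⟨a, ha, b, hb, rfl⟩ _ ⟨c, hc, d, hd, rfl⟩
  exact commute_commutatorElement_commutatorElement hA hB hAB ha hb hc hd

theorem commutator_normal_of_sup_eq_top (h : A ⊔ B = ⊤) : (⁅A, B⁆ : Subgroup G).Normal :=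
  normalizer_eq_top_iff.mp <| top_le_iff.mp <|
    h ▸ sup_le (normalizer_commutator_ge_left A B) (normalizer_commutator_ge_right A B)

theorem commutator_le_commutator_of_coe_mul_eq_univ
    (hA : ∀ x ∈ A, ∀ y ∈ A, x * y = y * x) (hB : ∀ x ∈ B, ∀ y ∈ B, x * y = y * x)
    (hAB : (A : Set G) * (B : Set G) = Set.univ) : _root_.commutator G ≤ ⁅A, B⁆ := by
  have hN := commutator_normal_of_sup_eq_top (sup_eq_top_of_coe_mul_eq_univ hAB)
  rw [_root_.commutator_def, commutator_le]
  rintro g - h -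
  obtain ⟨a, ha, b, hb, rfl⟩ : g ∈ (A : Set G) * (B : Set G) := hAB ▸ Set.mem_univ g
  obtain ⟨c, hc, d, hd, rfl⟩ : h ∈ (A : Set G) * (B : Set G) := hAB ▸ Set.mem_univ h
  have hbcd : ⁅b, c * d⁆ = ⁅c, b⁆⁻¹ := by
    rw [commutatorElement_mul_right_of_commute (hB b hb d hd), commutatorElement_inv]
  have hacd : ⁅a, c * d⁆ = c * ⁅a, d⁆ * c⁻¹ := by
    rw [commutatorElement_mul_right_eq_mul_conj,
      commutatorElement_eq_one_iff_mul_comm.mpr (hA a ha c hc), one_mul]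
  rw [commutatorElement_mul_left_eq_conj_mul, hbcd, hacd]
  exact mul_mem (hN.conj_mem _ (inv_mem (commutator_mem_commutator hc hb)) a)
    (hN.conj_mem _ (commutator_mem_commutator ha hd) c)

end Subgroup

theorem stmt1_general {G : Type*} [Group G] (A B : Subgroup G)
    (hprod : (A : Set G) * (B : Set G) = Set.univ)
    (hA : ∀ x ∈ A, ∀ y ∈ A, x * y = y * x)
    (hB : ∀ x ∈ B, ∀ y ∈ B, x * y = y * x) :
    ∀ x ∈ commutator G, ∀ y ∈ commutator G, x * y = y * x := by
  have := Subgroup.isMulCommutative_commutator_of_coe_mul_eq_univ hA hB hprod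
  have hle := Subgroup.commutator_le_commutator_of_coe_mul_eq_univ hA hB hprod
  intro x hx y hy
  exact setLike_mul_comm (hle hx) (hle hy)

theorem stmt1 {G : Type*} [Group G] [Finite G] (A B : Subgroup G)
    (hprod : (A : Set G) * (B : Set G) = Set.univ)
    (hA : ∀ x ∈ A, ∀ y ∈ A, x * y = y * x)
    (hB : ∀ x ∈ B, ∀ y ∈ B, x * y = y * x) :
    ∀ x ∈ commutator G, ∀ y ∈ commutator G, x * y = y * x :=
  stmt1_general A B hprod hA hB
end

section
/- Let G = AB be a finite group where A and B are subgroups, and let p be a prime. If A_p ∈ Syl_p(A) and B_p ∈ Syl_p(B) are chosen such that A_p B_p is a subgroup, then A_p B_p is a Sylow p-subgroup of G. More precisely, there exist Sylow p-subgroups A_p of A and B_p of B such that A_p B_p is a Sylow p-subgroup of G. -/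
/-!
Choose Sylow subgroups `S ⊇ A_p` and `T ⊇ B_p` of `G`. Writing `T = g • S` with `g⁻¹ = a * b`,
the Sylow subgroup `U = a⁻¹ • S = b • T` meets `A` and `B` in Sylow subgroups `P` and `Q` of them.
Then `PQ ⊆ U`, and the product formula `|PQ| |P ∩ Q| = |P| |Q|` together with
`|G| |A ∩ B| = |A| |B|` (from `G = AB`) and `|P ∩ Q| ≤ |A ∩ B|_p` gives `|PQ| ≥ |G|_p = |U|`.
-/

open Pointwise

namespace Subgroup

variable {G : Type*} [Group G]

theorem card_image_mk_eq_relIndex (H K : Subgroup G) :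
    Nat.card ((↑) '' (H : Set G) : Set (G ⧸ K)) = K.relIndex H := by
  have hsmul (h : H) : h • ((1 : G) : G ⧸ K) = ((h : G) : G ⧸ K) :=
    (MulAction.Quotient.smul_coe K (h : G) 1).trans (congrArg _ (mul_one _))
  have horbit : ((↑) '' (H : Set G) : Set (G ⧸ K)) = MulAction.orbit H ((1 : G) : G ⧸ K) := by
    ext x
    simp [MulAction.mem_orbit_iff, hsmul]
  have hstab : MulAction.stabilizer H ((1 : G) : G ⧸ K) = K.subgroupOf H := by
    ext h
    simp [mem_subgroupOf, hsmul, QuotientGroup.eq]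
  rw [horbit, relIndex, ← hstab, MulAction.index_stabilizer, Nat.card_coe_set_eq]

theorem card_mul_mul_card_inf (H K : Subgroup G) :
    Nat.card ((H : Set G) * (K : Set G)) * Nat.card ↥(H ⊓ K) = Nat.card H * Nat.card K := by
  have hinf : Nat.card (K.subgroupOf H) = Nat.card ↥(H ⊓ K) := by
    rw [← inf_subgroupOf_left, inf_comm]
    exact Nat.card_congr (subgroupOfEquivOfLe inf_le_right).toEquiv
  rw [card_mul_eq_card_subgroup_mul_card_quotient, card_image_mk_eq_relIndex, ← hinf, relIndex,
    mul_assoc, index_mul_card, mul_comm]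

theorem coe_eq_mul_of_card_mul_card_inf_le {P Q U : Subgroup G} [Finite U] (hPU : P ≤ U)
    (hQU : Q ≤ U) (hcard : Nat.card U * Nat.card ↥(P ⊓ Q) ≤ Nat.card P * Nat.card Q) :
    (U : Set G) = P * Q := by
  have hsub : (P : Set G) * Q ⊆ U :=
    Set.mul_subset_iff.mpr fun x hx y hy ↦ U.mul_mem (hPU hx) (hQU hy)
  have : Finite ↥(P ⊓ Q) := Finite.of_injective _ (inclusion_injective (inf_le_left.trans hPU))
  refine (Set.eq_of_subset_of_ncard_le hsub ?_ (U : Set G).toFinite).symm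
  rw [← Nat.card_coe_set_eq, ← Nat.card_coe_set_eq]
  refine Nat.le_of_mul_le_mul_right ?_ (Nat.card_pos (α := ↥(P ⊓ Q)))
  rw [card_mul_mul_card_inf]
  exact hcard

variable {p : ℕ} [Fact p.Prime]

theorem card_dvd_ordProj_of_isPGroup {P H : Subgroup G} [Finite H] (hP : IsPGroup p P)
    (hPH : P ≤ H) : Nat.card P ∣ ordProj[p] (Nat.card H) := by
  have : Finite P := Finite.of_injective _ (inclusion_injective hPH)
  obtain ⟨n, hn⟩ := IsPGroup.iff_card.mp hP
  rw [hn, ← Nat.Prime.pow_dvd_iff_dvd_ordProj Fact.out Nat.card_pos.ne', ← hn]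
  exact card_dvd_of_le hPH

theorem not_dvd_relIndex_of_card_eq_ordProj {P H : Subgroup G} [Finite H] (hPH : P ≤ H)
    (hcard : Nat.card P = ordProj[p] (Nat.card H)) : ¬ p ∣ P.relIndex H := by
  rintro ⟨k, hk⟩
  have hmul : P.relIndex H * Nat.card P = Nat.card H := by
    rw [← (P.subgroupOf H).index_mul_card, Nat.card_congr (subgroupOfEquivOfLe hPH).toEquiv]
    rfl
  refine Nat.pow_succ_factorization_not_dvd (Nat.card_pos (α := H)).ne' (Fact.out : p.Prime)
    ⟨k, ?_⟩
  rw [pow_succ, ← hcard, ← hmul, hk]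
  ring

end Subgroup

namespace Sylow

variable {G : Type*} [Group G] {p : ℕ}

theorem card_smul_inf_eq_of_mem (S : Sylow p G) {H : Subgroup G} {h : G} (hh : h ∈ H) :
    Nat.card ↥(((h • S : Sylow p G) : Subgroup G) ⊓ H) = Nat.card ↥((S : Subgroup G) ⊓ H) := by
  calc Nat.card ↥(MulAut.conj h • (S : Subgroup G) ⊓ H)
      = Nat.card ↥(MulAut.conj h • ((S : Subgroup G) ⊓ H)) := by
        rw [Subgroup.smul_inf, Subgroup.conj_smul_eq_self_of_mem hh]
    _ = Nat.card ↥((S : Subgroup G) ⊓ H) := Nat.card_congr (Subgroup.equivSMul _ _).toEquiv.symm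

variable [Finite G] [Fact p.Prime]

theorem exists_card_inf_eq_ordProj (H : Subgroup G) :
    ∃ S : Sylow p G, Nat.card ↥((S : Subgroup G) ⊓ H) = ordProj[p] (Nat.card H) := by
  obtain ⟨Q⟩ : Nonempty (Sylow p H) := inferInstance
  obtain ⟨S, hQS⟩ := (Q.isPGroup'.map H.subtype).exists_le_sylow
  have hcardQ : Nat.card (Q.map H.subtype) = ordProj[p] (Nat.card H) := by
    rw [← Q.card_eq_multiplicity]
    exact Nat.card_congr (Subgroup.equivMapOfInjective _ _ H.subtype_injective).toEquiv.symm
  refine ⟨S, Nat.dvd_antisymm ?_ ?_⟩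
  · exact Subgroup.card_dvd_ordProj_of_isPGroup (S.isPGroup'.to_le inf_le_left) inf_le_right
  · exact hcardQ ▸ Subgroup.card_dvd_of_le (le_inf hQS (Subgroup.map_subtype_le _))

theorem exists_card_inf_eq_ordProj_of_mul_eq_univ (A B : Subgroup G)
    (hprod : (A : Set G) * (B : Set G) = Set.univ) :
    ∃ U : Sylow p G, Nat.card ↥((U : Subgroup G) ⊓ A) = ordProj[p] (Nat.card A) ∧
      Nat.card ↥((U : Subgroup G) ⊓ B) = ordProj[p] (Nat.card B) := by
  obtain ⟨S, hS⟩ := exists_card_inf_eq_ordProj (p := p) A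
  obtain ⟨T, hT⟩ := exists_card_inf_eq_ordProj (p := p) B
  obtain ⟨g, rfl⟩ := MulAction.exists_smul_eq G S T
  obtain ⟨a, ha, b, hb, hab⟩ : g⁻¹ ∈ (A : Set G) * B := hprod ▸ Set.mem_univ _
  -- `a⁻¹ • S` is an `A`-conjugate of `S` and a `B`-conjugate of `T = g • S`, since `g⁻¹ = a * b`.
  have hg : g = b⁻¹ * a⁻¹ := by rw [← mul_inv_rev, show a * b = g⁻¹ from hab, inv_inv]
  have hU : a⁻¹ • S = b • g • S := by rw [hg, smul_smul, mul_inv_cancel_left]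
  refine ⟨a⁻¹ • S, ?_, ?_⟩
  · rw [card_smul_inf_eq_of_mem S (A.inv_mem ha), hS]
  · rw [hU, card_smul_inf_eq_of_mem _ hb, hT]

end Sylow

theorem stmt4 {G : Type*} [Group G] [Finite G] (A B : Subgroup G) (p : ℕ) (hp : p.Prime)
    (hprod : (A : Set G) * (B : Set G) = Set.univ) :
    ∃ P Q : Subgroup G, P ≤ A ∧ Q ≤ B ∧
      IsPGroup p P ∧ ¬ p ∣ P.relIndex A ∧
      IsPGroup p Q ∧ ¬ p ∣ Q.relIndex B ∧
      ∃ R : Subgroup G, (R : Set G) = (P : Set G) * (Q : Set G) ∧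
        IsPGroup p R ∧ ¬ p ∣ R.index := by
  have := Fact.mk hp
  obtain ⟨U, hA, hB⟩ := Sylow.exists_card_inf_eq_ordProj_of_mul_eq_univ (p := p) A B hprod
  set P : Subgroup G := U ⊓ A
  set Q : Subgroup G := U ⊓ B
  have hAB : Nat.card G * Nat.card ↥(A ⊓ B) = Nat.card A * Nat.card B := by
    rw [← Subgroup.card_mul_mul_card_inf, hprod, Nat.card_univ]
  have hPQ : Nat.card ↥(P ⊓ Q) ∣ ordProj[p] (Nat.card ↥(A ⊓ B)) :=
    Subgroup.card_dvd_ordProj_of_isPGroup (U.isPGroup'.to_le (inf_le_left.trans inf_le_left))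
      (inf_le_inf inf_le_right inf_le_right)
  have hU : (U : Set G) = P * Q := by
    refine Subgroup.coe_eq_mul_of_card_mul_card_inf_le inf_le_left inf_le_left ?_
    calc Nat.card U * Nat.card ↥(P ⊓ Q)
        ≤ ordProj[p] (Nat.card G) * ordProj[p] (Nat.card ↥(A ⊓ B)) :=
          Nat.mul_le_mul U.card_eq_multiplicity.le (Nat.le_of_dvd (Nat.ordProj_pos _ _) hPQ)
      _ = ordProj[p] (Nat.card A) * ordProj[p] (Nat.card B) := by
          rw [← Nat.ordProj_mul _ Nat.card_pos.ne' Nat.card_pos.ne', hAB,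
            Nat.ordProj_mul _ Nat.card_pos.ne' Nat.card_pos.ne']
      _ = Nat.card P * Nat.card Q := by rw [hA, hB]
  exact ⟨P, Q, inf_le_right, inf_le_right, U.isPGroup'.to_le inf_le_left,
    Subgroup.not_dvd_relIndex_of_card_eq_ordProj inf_le_right hA, U.isPGroup'.to_le inf_le_left,
    Subgroup.not_dvd_relIndex_of_card_eq_ordProj inf_le_right hB,
    U, hU, U.isPGroup', U.not_dvd_index⟩
end

section
/- For n ≥ 2 and a prime p, the affine group AGL(n, p) contains an element of order p^n if and only if n = 2 and p = 2. -/
/-- `AGL n p`: the affine group of the vector space `(ZMod p)^n`,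
realized as the group of affine self-equivalences. -/
abbrev AGL (n p : ℕ) [Fact (Nat.Prime p)] :=
  (Fin n → ZMod p) ≃ᵃ[ZMod p] (Fin n → ZMod p)

/-!
Sending `x ↦ A x + b` to the linear map `(x, t) ↦ (A x + t • b, t)` embeds `AGL(n, p)` into
`GL(n + 1, p)`. There an element `u` of `p`-power order is unipotent, so `(u - 1) ^ (n + 1) = 0`,
and since `u ^ p ^ k - 1 = (u - 1) ^ p ^ k` in characteristic `p`, already `u ^ p ^ k = 1` as soon as
`n + 1 ≤ p ^ k`. For `k = n - 1` this rules out order `p ^ n` unless `p ^ (n - 1) ≤ n`, i.e.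
`n = p = 2`; in `AGL(2, 2)` the map `x ↦ (x₀ + x₁, x₁ + 1)` has order `4`.
-/

open Module

theorem pow_char_pow_eq_one_of_sub_one_pow_eq_zero {R : Type*} [Ring R] (p : ℕ) [Fact p.Prime]
    [CharP R p] {x : R} {m k : ℕ} (hx : (x - 1) ^ m = 0) (hm : m ≤ p ^ k) : x ^ p ^ k = 1 := by
  rw [← sub_eq_zero, ← one_pow (p ^ k), ← sub_pow_char_pow_of_commute p k (Commute.one_right x)]
  exact pow_eq_zero_of_le hm hx

namespace Module.End

variable {K V : Type*} [Field K] [AddCommGroup V] [Module K V] [FiniteDimensional K V]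

theorem _root_.IsNilpotent.pow_finrank_eq_zero {f : End K V} (hf : IsNilpotent f) :
    f ^ finrank K V = 0 := by
  simpa only [hf.charpoly_eq_X_pow_finrank, map_pow, Polynomial.aeval_X] using
    f.aeval_self_charpoly

theorem pow_char_pow_eq_one_of_finrank_le (p : ℕ) [Fact p.Prime] [CharP K p] [Nontrivial V]
    {f : End K V} {a k : ℕ} (hf : f ^ p ^ a = 1) (hk : finrank K V ≤ p ^ k) : f ^ p ^ k = 1 := by
  have : CharP (End K V) p := charP_of_injective_algebraMap' K p
  have hnil : IsNilpotent (f - 1) :=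
    ⟨p ^ a, by rw [sub_pow_char_pow_of_commute p a (Commute.one_right f), hf, one_pow, sub_self]⟩
  exact pow_char_pow_eq_one_of_sub_one_pow_eq_zero p hnil.pow_finrank_eq_zero hk

end Module.End

namespace AffineEquiv

section CommRing

variable {R V : Type*} [CommRing R] [AddCommGroup V] [Module R V]

def toEndProd : (V ≃ᵃ[R] V) →* End R (V × R) where
  toFun g := (g.linear.toLinearMap.coprod (LinearMap.toSpanSingleton R V (g 0))).prod
    (LinearMap.snd R V R)
  map_one' := by
    ext v <;> simp [one_def]
  map_mul' g h := by
    have hlinear (v : V) : (g * h).linear v = g.linear (h.linear v) := rfl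
    have htrans : g (h 0) = g.linear (h 0) + g 0 := by simpa using g.map_vadd 0 (h 0)
    ext v <;> simp [hlinear, htrans]

theorem toEndProd_injective : Function.Injective (toEndProd : (V ≃ᵃ[R] V) →* End R (V × R)) := by
  refine (injective_iff_map_eq_one _).2 fun g hg => ?_
  have htrans : g 0 = 0 := by
    simpa [toEndProd] using congrArg Prod.fst (LinearMap.congr_fun hg (0, 1))
  have hlinear (x : V) : g.linear x = x := by
    simpa [toEndProd] using congrArg Prod.fst (LinearMap.congr_fun hg (x, 0))
  ext x
  simpa [htrans, hlinear] using g.map_vadd 0 x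

end CommRing

variable {K V : Type*} [Field K] [AddCommGroup V] [Module K V] [FiniteDimensional K V]
  (p : ℕ) [Fact p.Prime] [CharP K p]

theorem pow_char_pow_eq_one_of_finrank_lt {g : V ≃ᵃ[K] V} {a k : ℕ} (hg : g ^ p ^ a = 1)
    (hk : finrank K V < p ^ k) : g ^ p ^ k = 1 := by
  refine toEndProd_injective ?_
  rw [map_pow, map_one]
  refine End.pow_char_pow_eq_one_of_finrank_le p (a := a) ?_ ?_
  · rw [← map_pow, hg, map_one]
  · rwa [finrank_prod, finrank_self]

end AffineEquiv

theorem lt_pow_pred_of_ne_two {n p : ℕ} (hp : 2 ≤ p) (hn : 2 ≤ n) (hne : ¬(n = 2 ∧ p = 2)) :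
    n < p ^ (n - 1) := by
  obtain rfl | hn := hn.eq_or_lt
  · simp only [Nat.add_one_sub_one, pow_one]
    omega
  obtain ⟨m, rfl⟩ : ∃ m, n = m + 3 := ⟨n - 3, by omega⟩
  calc m + 3 < 2 ^ (m + 2) := by
        have := Nat.lt_two_pow_self (n := m)
        rw [pow_add]
        omega
    _ ≤ p ^ (m + 2) := Nat.pow_le_pow_left hp _

-- `x ↦ (x₀ + x₁, x₁ + 1)`; its square is the translation by `(1, 0)`.
def shearTranslation : AGL 2 2 :=
  (LinearEquiv.ofInvolutive (Matrix.mulVecLin !![1, 1; 0, 1])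
    (by unfold Function.Involutive; decide)).toAffineEquiv.trans
    (AffineEquiv.constVAdd (ZMod 2) _ ![0, 1])

theorem orderOf_shearTranslation : orderOf shearTranslation = 2 ^ 2 := by
  refine orderOf_eq_prime_pow (n := 1) ?_ ?_
  · intro h
    have := congrArg (· 0) h
    revert this
    decide
  · ext x : 1
    revert x
    decide

theorem stmt5 (n p : ℕ) [Fact (Nat.Prime p)] (hn : 2 ≤ n) :
    (∃ g : AGL n p, orderOf g = p ^ n) ↔ n = 2 ∧ p = 2 := by
  constructor
  · rintro ⟨g, hg⟩
    by_contra hne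
    have hp : p.Prime := Fact.out
    have hdim : finrank (ZMod p) (Fin n → ZMod p) < p ^ (n - 1) := by
      rw [finrank_fin_fun]
      exact lt_pow_pred_of_ne_two hp.two_le hn hne
    have hpow : g ^ p ^ (n - 1) = 1 :=
      AffineEquiv.pow_char_pow_eq_one_of_finrank_lt p (hg ▸ pow_orderOf_eq_one g) hdim
    have hdvd := orderOf_dvd_of_pow_eq_one hpow
    rw [hg, Nat.pow_dvd_pow_iff_le_right hp.one_lt] at hdvd
    omega
  · rintro ⟨rfl, rfl⟩
    exact ⟨shearTranslation, orderOf_shearTranslation⟩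
end

section
/- Let G be a finite group with an abelian normal subgroup N, and let M be a subgroup with N ≤ M ≤ G such that the order of N is coprime to the index [G : M]. If N has a complement in M, then N has a complement in G. -/
/-!
Writing each `m ∈ M` as `h * A m` with `h ∈ H` and `A m ∈ N`, the map `A : M → N` is, since
`N` is abelian, a crossed homomorphism for the conjugation action, equal to the identity on `N`.
Transferring it along a transversal of `M` in `G` gives a crossed homomorphism `G → N` which is
`n ↦ n ^ [G : M]` on `N`. As `[G : M]` is coprime to `|N|`, its kernel is a complement of `N` in `G`.
-/

open Pointwise
open scoped IsMulCommutative

section CrossedHom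

variable {G : Type*} [Group G] (N : Subgroup G) [N.Normal]

/-- `δ` is a crossed homomorphism `S → N` for the right action of `S` on `N` by conjugation. -/
def IsCrossedHomOn (S : Subgroup G) (δ : G → N) : Prop :=
  ∀ x ∈ S, ∀ y ∈ S, δ (x * y) = MulAut.conjNormal y⁻¹ (δ x) * δ y

variable {N} {δ : G → N}

/-- The homomorphism `g ↦ g * δ g`, whose fixed points form the kernel of `δ`. -/
noncomputable def IsCrossedHomOn.toMonoidHom (hδ : IsCrossedHomOn N ⊤ δ) : G →* G :=
  MonoidHom.mk' (fun g => g * δ g) fun x y => by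
    rw [hδ x trivial y trivial, MulMemClass.coe_mul, MulAut.conjNormal_apply]
    group

theorem IsCrossedHomOn.exists_complement (hδ : IsCrossedHomOn N ⊤ δ) {k : ℕ}
    (hk : (Nat.card N).Coprime k) (hδN : ∀ n : N, δ n = n ^ k) :
    ∃ K : Subgroup G, N ⊓ K = ⊥ ∧ (N : Set G) * (K : Set G) = Set.univ := by
  have hfix : ∀ g, hδ.toMonoidHom g = g ↔ δ g = 1 := fun g => by
    simp [IsCrossedHomOn.toMonoidHom]
  refine ⟨hδ.toMonoidHom.eqLocus (MonoidHom.id G), ?_, ?_⟩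
  · rw [eq_bot_iff]
    rintro x ⟨hxN, hxK⟩
    have hpow : (⟨x, hxN⟩ : N) ^ k = 1 := by
      rw [← hδN, ← hfix]
      exact hxK
    have : (⟨x, hxN⟩ : N) = 1 := (powCoprime hk).injective (by simpa using hpow)
    simpa using congrArg Subtype.val this
  · refine Set.eq_univ_of_forall fun g => ?_
    set n : N := (powCoprime hk).symm (MulAut.conjNormal g (δ g)⁻¹)
    have hn : n ^ k = MulAut.conjNormal g (δ g)⁻¹ := by
      rw [← powCoprime_apply hk, Equiv.apply_symm_apply]
    have hng : (n : G) * g ∈ hδ.toMonoidHom.eqLocus (MonoidHom.id G) := by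
      change hδ.toMonoidHom (n * g) = n * g
      simp only [map_mul, IsCrossedHomOn.toMonoidHom, MonoidHom.mk'_apply]
      rw [hδN, hn, MulAut.conjNormal_apply, Subgroup.coe_inv]
      group
    exact ⟨(n : G)⁻¹, inv_mem n.2, _, hng, by group⟩

end CrossedHom

section Transfer

variable {G : Type*} [Group G] {M : Subgroup G}

variable (M) in
/-- The element of `M` with `g * q.out = (g • q).out * transversalCocycle M g q`. -/
noncomputable def transversalCocycle (g : G) (q : G ⧸ M) : G :=
  (g • q).out⁻¹ * (g * q.out)

theorem transversalCocycle_mem (g : G) (q : G ⧸ M) : transversalCocycle M g q ∈ M := by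
  refine QuotientGroup.eq.mp ?_
  rw [← smul_eq_mul, ← MulAction.Quotient.smul_mk, QuotientGroup.out_eq', QuotientGroup.out_eq']

theorem transversalCocycle_mul (g g' : G) (q : G ⧸ M) :
    transversalCocycle M (g * g') q =
      transversalCocycle M g (g' • q) * transversalCocycle M g' q := by
  simp only [transversalCocycle, mul_smul]
  group

variable {N : Subgroup G} [N.Normal]

theorem smul_eq_self_of_mem (hNM : N ≤ M) {n : G} (hn : n ∈ N) (q : G ⧸ M) :
    n • q = q := by
  induction q using QuotientGroup.induction_on with | H x => ?_
  rw [MulAction.Quotient.smul_mk, QuotientGroup.eq, smul_eq_mul, mul_inv_rev]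
  exact hNM (‹N.Normal›.conj_mem' _ (inv_mem hn) x)

variable [IsMulCommutative N] [Fintype (G ⧸ M)]

variable (M) in
noncomputable def crossedTransfer (A : G → N) (g : G) : N :=
  ∏ q : G ⧸ M, MulAut.conjNormal q.out (A (transversalCocycle M g q))

variable {A : G → N}

theorem isCrossedHomOn_crossedTransfer (hA : IsCrossedHomOn N M A) :
    IsCrossedHomOn N ⊤ (crossedTransfer M A) := by
  intro g _ g' _
  have hterm : ∀ q : G ⧸ M,
      MulAut.conjNormal q.out (A (transversalCocycle M (g * g') q)) =
        MulAut.conjNormal g'⁻¹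
            (MulAut.conjNormal (g' • q).out (A (transversalCocycle M g (g' • q)))) *
          MulAut.conjNormal q.out (A (transversalCocycle M g' q)) := fun q => by
    rw [transversalCocycle_mul,
      hA _ (transversalCocycle_mem g _) _ (transversalCocycle_mem g' q)]
    ext
    simp only [transversalCocycle, MulAut.conjNormal_apply, MulMemClass.coe_mul]
    group
  rw [crossedTransfer, Finset.prod_congr rfl fun q _ => hterm q, Finset.prod_mul_distrib,
    ← map_prod]
  congr 2
  exact Fintype.prod_bijective _ (MulAction.bijective g') _ _ fun q => rfl

theorem crossedTransfer_of_mem (hNM : N ≤ M) (hA : ∀ n ∈ N, (A n : G) = n) (n : N) :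
    crossedTransfer M A n = n ^ M.index := by
  have hterm (q : G ⧸ M) : MulAut.conjNormal q.out (A (transversalCocycle M n q)) = n := by
    have hq := smul_eq_self_of_mem hNM n.2 q
    have hmem : transversalCocycle M n q ∈ N := by
      rw [transversalCocycle, hq, ← mul_assoc]
      exact ‹N.Normal›.conj_mem' _ n.2 _
    ext
    rw [MulAut.conjNormal_apply, hA _ hmem, transversalCocycle, hq]
    group
  rw [crossedTransfer, Finset.prod_congr rfl fun q _ => hterm q, Finset.prod_const,
    Finset.card_univ, Subgroup.index_eq_card, Nat.card_eq_fintype_card]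

end Transfer

section Complement

variable {G : Type*} [Group G] {N H : Subgroup G}

theorem eq_of_mul_inv_mem_of_inf_eq_bot (hdisj : N ⊓ H = ⊥) {x a b : G} (ha : a ∈ N)
    (hb : b ∈ N) (hxa : x * a⁻¹ ∈ H) (hxb : x * b⁻¹ ∈ H) : a = b := by
  have hab : a * b⁻¹ ∈ N ⊓ H := by
    have h : (x * a⁻¹)⁻¹ * (x * b⁻¹) = a * b⁻¹ := by group
    exact Subgroup.mem_inf.mpr ⟨mul_mem ha (inv_mem hb), h ▸ mul_mem (inv_mem hxa) hxb⟩
  rwa [hdisj, Subgroup.mem_bot, mul_inv_eq_one] at hab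

variable [N.Normal] [IsMulCommutative N]

theorem exists_isCrossedHomOn_of_inf_eq_bot_of_mul_eq {M : Subgroup G} (hdisj : N ⊓ H = ⊥)
    (hprod : (N : Set G) * (H : Set G) = M) :
    ∃ A : G → N, IsCrossedHomOn N M A ∧ ∀ n ∈ N, (A n : G) = n := by
  have hNM : N ≤ M := fun n hn => by
    have := Set.mul_mem_mul hn H.one_mem
    rwa [mul_one, hprod] at this
  have hdec (g : G) : ∃ a : N, g ∈ M → g * (a : G)⁻¹ ∈ H := by
    by_cases hg : g ∈ M
    · obtain ⟨a, ha, h, hh, rfl⟩ : g ∈ (N : Set G) * H := hprod ▸ hg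
      exact ⟨⟨h⁻¹ * a * h, ‹N.Normal›.conj_mem' a ha h⟩, fun _ => by simpa [mul_assoc] using hh⟩
    · exact ⟨1, fun h => absurd h hg⟩
  choose A hA using hdec
  refine ⟨A, fun x hx y hy => ?_, fun n hn => ?_⟩
  · set a : N := A x
    set b : N := A y
    have hcomm : (b : G)⁻¹ * (y⁻¹ * (a : G)⁻¹ * y) = y⁻¹ * (a : G)⁻¹ * y * (b : G)⁻¹ := by
      have := congrArg Subtype.val (mul_comm b⁻¹ (MulAut.conjNormal y⁻¹ a⁻¹))
      simpa only [Subgroup.coe_mul, Subgroup.coe_inv, MulAut.conjNormal_apply, inv_inv]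
        using this
    ext
    refine eq_of_mul_inv_mem_of_inf_eq_bot hdisj (A (x * y)).2 (SetLike.coe_mem _)
      (hA _ (mul_mem hx hy)) ?_
    convert mul_mem (hA x hx) (hA y hy) using 1
    simp only [MulAut.conjNormal_apply, Subgroup.coe_mul, inv_inv]
    calc x * y * (y⁻¹ * a * y * b)⁻¹ = x * y * ((b : G)⁻¹ * (y⁻¹ * (a : G)⁻¹ * y)) := by group
      _ = x * y * (y⁻¹ * (a : G)⁻¹ * y * (b : G)⁻¹) := by rw [hcomm]
      _ = x * (a : G)⁻¹ * (y * (b : G)⁻¹) := by group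
  · exact eq_of_mul_inv_mem_of_inf_eq_bot hdisj (A n).2 hn (hA n (hNM hn)) (by simp)

end Complement

theorem stmt6 {G : Type*} [Group G] [Finite G] (N M : Subgroup G)
    (hNM : N ≤ M) (hN : N.Normal) (hab : ∀ x ∈ N, ∀ y ∈ N, x * y = y * x)
    (hcop : Nat.Coprime (Nat.card N) M.index)
    (hcompl : ∃ H : Subgroup G, H ≤ M ∧ N ⊓ H = ⊥ ∧ (N : Set G) * (H : Set G) = (M : Set G)) :
    ∃ H : Subgroup G, N ⊓ H = ⊥ ∧ (N : Set G) * (H : Set G) = Set.univ := by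
  obtain ⟨H, -, hdisj, hprod⟩ := hcompl
  have : IsMulCommutative N := ⟨⟨fun a b => Subtype.ext (hab a a.2 b b.2)⟩⟩
  have := Fintype.ofFinite (G ⧸ M)
  obtain ⟨A, hA, hAN⟩ := exists_isCrossedHomOn_of_inf_eq_bot_of_mul_eq hdisj hprod
  exact (isCrossedHomOn_crossedTransfer hA).exists_complement hcop
    (crossedTransfer_of_mem hNM hAN)
end

section
/- Let p be an odd prime and G a finite p-group containing a cyclic maximal subgroup. Then G is isomorphic to one of: the cyclic group Z_{p^n}, the direct product Z_{p^{n-1}} × Z_p with n ≥ 2, or the modular group ⟨a, b | a^{p^{n-1}} = b^p = 1, a^b = a^{1+p^{n-2}}⟩ with n ≥ 3. -/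
/-!
Let `H = ⟨a⟩` be the cyclic subgroup of index `p`, of order `p ^ (n - 1)`; it is normal, so every
`b` acts on it by `b⁻¹ a b = a ^ r`, and `b ^ p ∈ H` forces `r ^ p ≡ 1 (mod p ^ (n - 1))`. For odd
`p`, lifting the exponent turns this into `p * (r - 1) ≡ 0` and `(r - 1) ^ 2 ≡ 0`, whence
`1 + r + ⋯ + r ^ (p - 1) ≡ p` and `(b a ^ t) ^ p = b ^ p a ^ (p t)`. Since `G` is not cyclic, for
`b ∉ H` we have `b ^ p = a ^ (p k)`, so `b a ^ (-k)` is an element of order `p` outside `H`.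
If it commutes with `a`, then `G = ⟨a⟩ × ⟨b⟩`; otherwise `r = 1 + p ^ (n - 2) s` with `p ∤ s`, and
replacing `b` by a suitable power `b ^ j` makes `r = 1 + p ^ (n - 2)`.
-/

open Subgroup Finset

theorem one_add_pow_of_sq_eq_zero {R : Type*} [CommRing R] {d : R} (hd : d ^ 2 = 0) (i : ℕ) :
    (1 + d) ^ i = 1 + i * d := by
  induction i with
  | zero => simp
  | succ i ih =>
    rw [pow_succ, ih]
    push_cast
    linear_combination (i : R) * hd

theorem geom_sum_one_add_of_sq_eq_zero {R : Type*} [CommRing R] {d : R} {p : ℕ} (hodd : Odd p)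
    (hd : d ^ 2 = 0) (hpd : (p : R) * d = 0) : ∑ i ∈ range p, (1 + d) ^ i = p := by
  obtain ⟨k, rfl⟩ := hodd
  have hsum : ∑ i ∈ range (2 * k + 1), i = (2 * k + 1) * k := by
    have := sum_range_id_mul_two (2 * k + 1)
    rw [Nat.add_sub_cancel] at this
    linarith
  simp only [one_add_pow_of_sq_eq_zero hd, sum_add_distrib, ← sum_mul, sum_const, card_range]
  rw [← Nat.cast_sum, hsum]
  push_cast at hpd ⊢
  linear_combination (k : R) * hpd

theorem Int.prime_dvd_sub_one_of_dvd_pow_sub_one {p : ℕ} (hp : p.Prime) {r : ℤ}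
    (h : (p : ℤ) ∣ r ^ p - 1) : (p : ℤ) ∣ r - 1 := by
  have := Fact.mk hp
  rw [← ZMod.intCast_zmod_eq_zero_iff_dvd] at h ⊢
  push_cast at h ⊢
  rwa [ZMod.pow_card] at h

theorem Int.prime_pow_dvd_sub_one_of_dvd_pow_sub_one {p m : ℕ} (hp : p.Prime) (hodd : Odd p)
    {r : ℤ} (h : (p : ℤ) ^ (m + 1) ∣ r ^ p - 1) : (p : ℤ) ^ m ∣ r - 1 := by
  have h1 : (p : ℤ) ∣ r - 1 :=
    Int.prime_dvd_sub_one_of_dvd_pow_sub_one hp ((dvd_pow_self _ m.succ_ne_zero).trans h)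
  have hr : ¬ (p : ℤ) ∣ r := fun hr =>
    (Nat.prime_iff_prime_int.mp hp).not_dvd_one (by simpa using dvd_sub hr h1)
  have lte := Int.emultiplicity_pow_sub_pow hp hodd (y := 1) (by simpa using h1) hr p
  rw [one_pow, hp.emultiplicity_self] at lte
  rw [pow_dvd_iff_le_emultiplicity, lte] at h
  rw [pow_dvd_iff_le_emultiplicity]
  push_cast at h
  exact (ENat.add_le_add_iff_right ENat.one_ne_top).mp h

namespace ZMod

variable {p m : ℕ}

theorem prime_mul_sub_one_eq_zero_and_sq_eq_zero (hp : p.Prime) (hodd : Odd p)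
    {x : ZMod (p ^ (m + 1))} (hx : x ^ p = 1) :
    (p : ZMod (p ^ (m + 1))) * (x - 1) = 0 ∧ (x - 1) ^ 2 = 0 := by
  obtain ⟨r, rfl⟩ := intCast_surjective x
  have h : (p : ℤ) ^ (m + 1) ∣ r ^ p - 1 := by
    rw [← Nat.cast_pow, ← intCast_zmod_eq_zero_iff_dvd]
    push_cast
    rw [hx, sub_self]
  have hm := Int.prime_pow_dvd_sub_one_of_dvd_pow_sub_one hp hodd h
  have h1 := Int.prime_dvd_sub_one_of_dvd_pow_sub_one hp ((dvd_pow_self _ m.succ_ne_zero).trans h)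
  constructor
  · have : (p : ℤ) ^ (m + 1) ∣ p * (r - 1) := pow_succ' (p : ℤ) m ▸ mul_dvd_mul_left _ hm
    exact_mod_cast (intCast_zmod_eq_zero_iff_dvd _ _).mpr (by exact_mod_cast this)
  · have : (p : ℤ) ^ (m + 1) ∣ (r - 1) ^ 2 := pow_succ (p : ℤ) m ▸ sq (r - 1) ▸ mul_dvd_mul hm h1
    exact_mod_cast (intCast_zmod_eq_zero_iff_dvd _ _).mpr (by exact_mod_cast this)

theorem geom_sum_eq_prime_of_pow_eq_one (hp : p.Prime) (hodd : Odd p)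
    {x : ZMod (p ^ (m + 1))} (hx : x ^ p = 1) : ∑ i ∈ range p, x ^ i = p := by
  obtain ⟨hpx, hx2⟩ := prime_mul_sub_one_eq_zero_and_sq_eq_zero hp hodd hx
  simpa using geom_sum_one_add_of_sq_eq_zero hodd hx2 hpx

theorem exists_natCast_mul_eq_prime_pow (hp : p.Prime) {d : ZMod (p ^ (m + 1))}
    (hd : (p : ZMod (p ^ (m + 1))) * d = 0) (hd0 : d ≠ 0) :
    ∃ j : ℕ, ¬ p ∣ j ∧ (j : ZMod (p ^ (m + 1))) * d = p ^ m := by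
  have : NeZero (p ^ (m + 1)) := ⟨pow_ne_zero _ hp.ne_zero⟩
  obtain ⟨v, rfl⟩ := natCast_zmod_surjective d
  obtain ⟨s, rfl⟩ : p ^ m ∣ v := by
    have : p ^ m * p ∣ v * p := by
      rw [← pow_succ, mul_comm, ← natCast_eq_zero_iff]; exact_mod_cast hd
    exact Nat.dvd_of_mul_dvd_mul_right hp.pos this
  have hs : ¬ p ∣ s := by
    rintro ⟨s, rfl⟩
    exact hd0 ((natCast_eq_zero_iff _ _).mpr ⟨s, by ring⟩)
  obtain ⟨j, -, hj⟩ := Nat.exists_mul_mod_eq_one_of_coprime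
    ((Nat.coprime_comm.mp ((hp.coprime_iff_not_dvd).mpr hs))) hp.one_lt
  refine ⟨j, ?_, ?_⟩
  · rintro ⟨c, rfl⟩
    simp [Nat.mul_left_comm s p, Nat.mul_mod_right] at hj
  · obtain ⟨q, hq⟩ : ∃ q, s * j = p * q + 1 := ⟨s * j / p, by rw [← hj, Nat.div_add_mod]⟩
    calc (j : ZMod (p ^ (m + 1))) * ((p ^ m * s : ℕ) : ZMod (p ^ (m + 1)))
        = p ^ m * ((s * j : ℕ) : ZMod (p ^ (m + 1))) := by push_cast; ring
      _ = p ^ m + ((p ^ (m + 1) : ℕ) : ZMod (p ^ (m + 1))) * q := by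
        rw [hq]; push_cast; ring
      _ = p ^ m := by rw [natCast_self, zero_mul, add_zero]

theorem exists_pow_eq_one_add_prime_pow (hp : p.Prime) (hodd : Odd p)
    {x : ZMod (p ^ (m + 1))} (hx : x ^ p = 1) (hx1 : x ≠ 1) :
    ∃ j : ℕ, ¬ p ∣ j ∧ x ^ j = 1 + p ^ m := by
  obtain ⟨hpx, hx2⟩ := prime_mul_sub_one_eq_zero_and_sq_eq_zero hp hodd hx
  obtain ⟨j, hpj, hj⟩ := exists_natCast_mul_eq_prime_pow hp hpx (sub_ne_zero.mpr hx1)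
  refine ⟨j, hpj, ?_⟩
  rw [← add_sub_cancel 1 x, one_add_pow_of_sq_eq_zero hx2, hj]

end ZMod

section Group

variable {G : Type*} [Group G] {a b : G} {r : ℕ}

theorem pow_eq_pow_iff_natCast_eq {M : ℕ} (ha : orderOf a = M) {x y : ℕ} :
    a ^ x = a ^ y ↔ (x : ZMod M) = y := by
  rw [pow_eq_pow_iff_modEq, ha, ZMod.natCast_eq_natCast_iff]

theorem inv_pow_mul_pow_mul_pow_of_conj (h : b⁻¹ * a * b = a ^ r) (i x : ℕ) :
    (b ^ i)⁻¹ * a ^ x * b ^ i = a ^ (x * r ^ i) := by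
  induction i with
  | zero => simp
  | succ i ih =>
    calc (b ^ (i + 1))⁻¹ * a ^ x * b ^ (i + 1) = b⁻¹ * ((b ^ i)⁻¹ * a ^ x * b ^ i) * b := by
          rw [pow_succ]; group
      _ = (b⁻¹ * a * b) ^ (x * r ^ i) := by rw [ih]; simpa using (conj_pow (a := b⁻¹)).symm
      _ = a ^ (x * r ^ (i + 1)) := by rw [h, ← pow_mul]; ring_nf

theorem mul_pow_pow_of_conj (h : b⁻¹ * a * b = a ^ r) (t i : ℕ) :
    (b * a ^ t) ^ i = b ^ i * a ^ (t * ∑ j ∈ range i, r ^ j) := by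
  induction i with
  | zero => simp
  | succ i ih =>
    calc (b * a ^ t) ^ (i + 1) = b * b ^ i * ((b ^ i)⁻¹ * a ^ t * b ^ i) *
          a ^ (t * ∑ j ∈ range i, r ^ j) := by rw [pow_succ', ih]; group
      _ = b ^ (i + 1) * a ^ (t * ∑ j ∈ range (i + 1), r ^ j) := by
        rw [inv_pow_mul_pow_mul_pow_of_conj h, mul_assoc, ← pow_add, ← pow_succ',
          sum_range_succ]
        ring_nf

theorem natCast_pow_eq_one_of_conj {M i : ℕ} (ha : orderOf a = M)
    (h : b⁻¹ * a * b = a ^ r) (hb : b ^ i ∈ zpowers a) : (r : ZMod M) ^ i = 1 := by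
  obtain ⟨k, hk⟩ := mem_zpowers_iff.mp hb
  have hcomm : (b ^ i)⁻¹ * a ^ 1 * b ^ i = a ^ 1 := by rw [← hk]; group
  rw [inv_pow_mul_pow_mul_pow_of_conj h, pow_eq_pow_iff_natCast_eq ha] at hcomm
  simpa using hcomm

theorem exists_inv_mul_mul_eq_pow [Finite G] [(zpowers a).Normal] (b : G) :
    ∃ r : ℕ, b⁻¹ * a * b = a ^ r := by
  have := ‹(zpowers a).Normal›.conj_mem a (mem_zpowers a) b⁻¹
  rw [inv_inv, ← mem_powers_iff_mem_zpowers] at this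
  exact (Submonoid.mem_powers_iff _ _).mp this |>.imp fun _ => Eq.symm

theorem orderOf_dvd_prime_pow_of_not_isCyclic [Finite G] {p k : ℕ} (hp : p.Prime)
    (hcard : Nat.card G = p ^ (k + 1)) (hG : ¬IsCyclic G) (g : G) : orderOf g ∣ p ^ k := by
  obtain ⟨i, hi, hg⟩ := (Nat.dvd_prime_pow hp).mp (hcard ▸ orderOf_dvd_natCard g)
  have : i ≠ k + 1 := by
    rintro rfl
    exact hG (isCyclic_of_orderOf_eq_card g (hg.trans hcard.symm))
  exact hg ▸ pow_dvd_pow p (by omega)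

theorem two_le_of_not_isCyclic [Finite G] {p n : ℕ} (hp : p.Prime) (hcard : Nat.card G = p ^ n)
    (hG : ¬IsCyclic G) : 2 ≤ n := by
  by_contra! hn
  interval_cases n
  · exact hG (@isCyclic_of_subsingleton _ _ (Nat.card_eq_one_iff_unique.mp hcard).1)
  · have := Fact.mk hp
    exact hG (isCyclic_of_prime_card (hcard.trans (pow_one p)))

theorem disjoint_zpowers_of_orderOf_eq_prime [Finite G] {H : Subgroup G} {p : ℕ} (hp : p.Prime)
    (hb : orderOf b = p) (hbH : b ∉ H) : Disjoint H (zpowers b) := by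
  have hdvd : Nat.card (H ⊓ zpowers b : Subgroup G) ∣ p :=
    hb ▸ Nat.card_zpowers b ▸ card_dvd_of_le inf_le_right
  rcases (Nat.dvd_prime hp).mp hdvd with h1 | hp'
  · exact disjoint_iff.mpr (card_eq_one.mp h1)
  · refine absurd ?_ hbH
    have := eq_of_le_of_card_ge (inf_le_right : H ⊓ zpowers b ≤ _)
      (by rw [hp', Nat.card_zpowers, hb])
    exact (this.ge (mem_zpowers b)).1

theorem eq_top_of_le_of_index_prime {H K : Subgroup G} (hH : H.index.Prime) (hHK : H ≤ K)
    (hKH : ¬K ≤ H) : K = ⊤ := by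
  rcases (Nat.dvd_prime hH).mp (index_dvd_of_le hHK) with h1 | hp
  · exact index_eq_one.mp h1
  · refine absurd ?_ hKH
    rw [← relIndex_eq_one]
    have := relIndex_mul_index hHK
    rw [hp] at this
    exact (Nat.mul_eq_right hH.ne_zero).mp this

noncomputable def Subgroup.IsComplement'.mulEquivProd {H K : Subgroup G} (h : H.IsComplement' K)
    (hcomm : ∀ x ∈ H, ∀ y ∈ K, Commute x y) : H × K ≃* G :=
  MulEquiv.ofBijective (H.subtype.noncommCoprod K.subtype fun x y => hcomm x x.2 y y.2) h

variable [Finite G] {p m : ℕ}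

theorem exists_orderOf_eq_prime_notMem_zpowers (hp : p.Prime) (hodd : Odd p)
    (hcard : Nat.card G = p ^ (m + 2)) (hG : ¬IsCyclic G) [(zpowers a).Normal]
    (hindex : (zpowers a).index = p) (ha : orderOf a = p ^ (m + 1)) :
    ∃ b ∉ zpowers a, orderOf b = p := by
  have := Fact.mk hp
  obtain ⟨b, hb⟩ : ∃ b, b ∉ zpowers a := by
    by_contra! h
    exact hG (isCyclic_iff_exists_zpowers_eq_top.mpr ⟨a, eq_top_iff' _ |>.mpr h⟩)
  obtain ⟨r, hr⟩ := exists_inv_mul_mul_eq_pow (a := a) b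
  have hbp : b ^ p ∈ zpowers a := hindex ▸ pow_index_mem _ b
  obtain ⟨k, hk⟩ := (Submonoid.mem_powers_iff _ _).mp (mem_powers_iff_mem_zpowers.mpr hbp)
  -- Since `G` is not cyclic, `b ^ p = a ^ k` has order dividing `p ^ m`, so it lies in `⟨a ^ p⟩`.
  obtain ⟨k, rfl⟩ : p ∣ k := by
    have : a ^ (k * p ^ m) = 1 := by
      rw [pow_mul, hk, ← pow_mul, ← pow_succ',
        orderOf_dvd_iff_pow_eq_one.mp (orderOf_dvd_prime_pow_of_not_isCyclic hp hcard hG b)]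
    have : p ^ m * p ∣ p ^ m * k := by
      rw [← pow_succ, mul_comm, ← ha]; exact orderOf_dvd_of_pow_eq_one this
    exact Nat.dvd_of_mul_dvd_mul_left (pow_pos hp.pos m) this
  have hsum : ∑ j ∈ range p, (r : ZMod (p ^ (m + 1))) ^ j = p :=
    ZMod.geom_sum_eq_prime_of_pow_eq_one hp hodd (natCast_pow_eq_one_of_conj ha hr hbp)
  set t := (-(k : ZMod (p ^ (m + 1)))).val with ht
  have hbt : b * a ^ t ∉ zpowers a := fun h =>
    hb ((mul_mem_cancel_right (pow_mem (mem_zpowers a) t)).mp h)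
  refine ⟨b * a ^ t, hbt, orderOf_eq_prime ?_ fun h => hbt (h ▸ one_mem _)⟩
  rw [mul_pow_pow_of_conj hr, ← hk, ← pow_add, ← pow_zero a, pow_eq_pow_iff_natCast_eq ha]
  push_cast [hsum, ht, ZMod.natCast_val, ZMod.cast_id]
  ring

theorem nonempty_mulEquiv_prod_of_commute (hp : p.Prime) (hcard : Nat.card G = p ^ (m + 2))
    (ha : orderOf a = p ^ (m + 1)) (hb : orderOf b = p) (hbH : b ∉ zpowers a)
    (hab : Commute a b) : Nonempty (G ≃* Multiplicative (ZMod (p ^ (m + 1)) × ZMod p)) := by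
  have : NeZero (p ^ (m + 1)) := ⟨pow_ne_zero _ hp.ne_zero⟩
  have : NeZero p := ⟨hp.ne_zero⟩
  have hcompl : (zpowers a).IsComplement' (zpowers b) :=
    isComplement'_of_card_mul_and_disjoint
      (by rw [Nat.card_zpowers, Nat.card_zpowers, ha, hb, hcard, ← pow_succ])
      (disjoint_zpowers_of_orderOf_eq_prime hp hb hbH)
  have hcomm : ∀ x ∈ zpowers a, ∀ y ∈ zpowers b, Commute x y := by
    rintro _ ⟨i, rfl⟩ _ ⟨j, rfl⟩
    exact hab.zpow_zpow i j
  let eA : zpowers a ≃* Multiplicative (ZMod (p ^ (m + 1))) :=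
    mulEquivOfCyclicCardEq (by simp [ha])
  let eB : zpowers b ≃* Multiplicative (ZMod p) := mulEquivOfCyclicCardEq (by simp [hb])
  exact ⟨(hcompl.mulEquivProd hcomm).symm.trans <|
    (eA.prodCongr eB).trans (MulEquiv.prodMultiplicative _ _).symm⟩

theorem exists_inv_mul_mul_eq_pow_one_add_prime_pow (hp : p.Prime) (hodd : Odd p)
    [(zpowers a).Normal] (hindex : (zpowers a).index = p) (ha : orderOf a = p ^ (m + 1))
    (hb : orderOf b = p) (hbH : b ∉ zpowers a) (hab : ¬Commute a b) :
    ∃ c, orderOf c = p ∧ c⁻¹ * a * c = a ^ (1 + p ^ m) ∧ closure {a, c} = ⊤ := by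
  obtain ⟨r, hr⟩ := exists_inv_mul_mul_eq_pow (a := a) b
  have hconj (j : ℕ) : (b ^ j)⁻¹ * a * b ^ j = a ^ r ^ j := by
    simpa using inv_pow_mul_pow_mul_pow_of_conj hr j 1
  have hrp : (r : ZMod (p ^ (m + 1))) ^ p = 1 :=
    natCast_pow_eq_one_of_conj ha hr (by rw [← hb, pow_orderOf_eq_one]; exact one_mem _)
  have hr1 : (r : ZMod (p ^ (m + 1))) ≠ 1 := by
    intro h
    have : b⁻¹ * a * b = a := by
      rw [hr, ← pow_one a, ← pow_mul, one_mul, pow_eq_pow_iff_natCast_eq ha, h, Nat.cast_one]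
    exact hab (inv_mul_eq_iff_eq_mul.mp (by rw [← mul_assoc, this]))
  obtain ⟨j, hpj, hj⟩ := ZMod.exists_pow_eq_one_add_prime_pow hp hodd hrp hr1
  have hbj : orderOf (b ^ j) = p :=
    hb ▸ Nat.Coprime.orderOf_pow (hb ▸ (hp.coprime_iff_not_dvd.mpr hpj))
  have hbjH : b ^ j ∉ zpowers a := fun h => hp.ne_one <| hbj ▸ orderOf_eq_one_iff.mpr <|
    disjoint_def.mp (disjoint_zpowers_of_orderOf_eq_prime hp hb hbH) h (pow_mem (mem_zpowers b) j)
  refine ⟨b ^ j, hbj, ?_, ?_⟩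
  · rw [hconj, pow_eq_pow_iff_natCast_eq ha]
    push_cast
    exact hj
  · exact eq_top_of_le_of_index_prime (hindex ▸ hp) (zpowers_le.mpr (subset_closure (by simp)))
      fun h => hbjH (h (subset_closure (by simp)))

end Group

theorem stmt8 {G : Type*} [Group G] [Finite G] (p n : ℕ) (hp : p.Prime) (hodd : Odd p)
    (hcard : Nat.card G = p ^ n)
    (hmax : ∃ H : Subgroup G, IsCyclic H ∧ H.index = p) :
    IsCyclic G ∨
    (2 ≤ n ∧ Nonempty (G ≃* Multiplicative (ZMod (p ^ (n - 1)) × ZMod p))) ∨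
    (3 ≤ n ∧ ∃ a b : G, orderOf a = p ^ (n - 1) ∧ orderOf b = p ∧
      b⁻¹ * a * b = a ^ (1 + p ^ (n - 2)) ∧ Subgroup.closure {a, b} = ⊤) := by
  by_cases hG : IsCyclic G
  · exact Or.inl hG
  right
  obtain ⟨H, hH, hindex⟩ := hmax
  obtain ⟨m, rfl⟩ := Nat.exists_eq_add_of_le' (two_le_of_not_isCyclic hp hcard hG)
  obtain ⟨a, rfl⟩ := H.isCyclic_iff_exists_zpowers_eq_top.mp hH
  have : (zpowers a).Normal :=
    normal_of_index_eq_minFac_card (by rw [hindex, hcard, hp.pow_minFac (by omega)])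
  have ha : orderOf a = p ^ (m + 1) := by
    have := (zpowers a).card_mul_index
    rw [Nat.card_zpowers, hindex, hcard, pow_succ] at this
    exact Nat.eq_of_mul_eq_mul_right hp.pos this
  obtain ⟨b, hbH, hb⟩ := exists_orderOf_eq_prime_notMem_zpowers hp hodd hcard hG hindex ha
  rw [show m + 2 - 1 = m + 1 by omega, Nat.add_sub_cancel]
  by_cases hab : Commute a b
  · exact Or.inl ⟨le_add_self, nonempty_mulEquiv_prod_of_commute hp hcard ha hb hbH hab⟩
  · have hm : m ≠ 0 := by
      rintro rfl
      have := Fact.mk hp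
      exact hab ((IsPGroup.isMulCommutative_of_card_eq_prime_sq hcard).is_comm.comm a b)
    obtain ⟨c, hc, hac, hclosure⟩ :=
      exists_inv_mul_mul_eq_pow_one_add_prime_pow hp hodd hindex ha hb hbH hab
    exact Or.inr ⟨by omega, a, c, ha, hc, hac, hclosure⟩
end

section
/- Let X be a finite solvable group acting faithfully and 2-transitively on the coset space [X : M] for some subgroup M, where the index [X : M] is a composite number, and suppose X contains a subgroup isomorphic to the semidihedral group SD_{8n} (n ≥ 2) acting regularly. Then X contains no element of order p^k, where p^k = [X : M] is the degree. -/
/-- `G` is the semidihedral group `SD_{8n}`. -/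
def IsSemidihedral (n : ℕ) (G : Type*) [Group G] : Prop :=
  Nat.card G = 8 * n ∧ ∃ a b : G, orderOf a = 4 * n ∧ orderOf b = 2 ∧
    b⁻¹ * a * b = a ^ (2 * n - 1) ∧ Subgroup.closure {a, b} = ⊤

/-- 2-transitivity of the action of `G` on `Ω`. -/
def IsTwoTransitive (G Ω : Type*) [Group G] [MulAction G Ω] : Prop :=
  ∀ α β α' β' : Ω, α ≠ β → α' ≠ β' → ∃ g : G, g • α = α' ∧ g • β = β'

/-!
A solvable 2-transitive group `X` of degree `p ^ k` has a regular normal subgroup `N` which is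
elementary abelian, so `N ≅ 𝔽_p^k` and `N` is its own centralizer. Conjugation by a `p`-element
`x` is a unipotent automorphism of `𝔽_p^k`, hence is killed by `p ^ j` as soon as `k ≤ p ^ j`;
then `x ^ p ^ j` centralizes `N`, lies in `N`, and `x ^ p ^ (j + 1) = 1`. Here the regular
semidihedral subgroup forces the degree to be `8n = 2 ^ k` with `k ≥ 4`, and `j = k - 2` shows
that no element has order `2 ^ k`.
-/

open Module MulAction
open scoped IsMulCommutative

theorem Module.End.pow_prime_pow_eq_one_of_finrank_le {K V : Type*} [Field K] {p : ℕ}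
    [Fact p.Prime] [CharP K p] [AddCommGroup V] [Module K V] [FiniteDimensional K V]
    {f : Module.End K V} {m j : ℕ} (hf : f ^ p ^ m = 1) (hj : finrank K V ≤ p ^ j) :
    f ^ p ^ j = 1 := by
  have frobenius (i : ℕ) : (f - 1) ^ p ^ i = f ^ p ^ i - 1 := by
    simpa using congrArg (Polynomial.aeval f)
      (sub_pow_char_pow (Polynomial.X : Polynomial K) 1 (p := p) (n := i))
  have hnil : IsNilpotent (f - 1) := ⟨p ^ m, by rw [frobenius, hf, sub_self]⟩
  have hfinrank : (f - 1) ^ finrank K V = 0 := by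
    simpa [hnil.charpoly_eq_X_pow_finrank] using (f - 1).aeval_self_charpoly
  rw [← sub_eq_zero, ← frobenius, pow_eq_zero_of_le hj hfinrank]

theorem MulAut.pow_prime_pow_eq_one_of_natCard_eq {A : Type*} [CommGroup A] {p : ℕ}
    [hp : Fact p.Prime] (hexp : ∀ a : A, a ^ p = 1) {k : ℕ} (hcard : Nat.card A = p ^ k)
    {σ : MulAut A} {m j : ℕ} (hσ : σ ^ p ^ m = 1) (hj : k ≤ p ^ j) : σ ^ p ^ j = 1 := by
  -- `have`, not `letI`: unfolding `AddCommGroup.zmodModule` gets stuck on its `match` on `p`,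
  -- which breaks the instances on `Module.End`.
  have : Module (ZMod p) (Additive A) := AddCommGroup.zmodModule fun a ↦ hexp a.toMul
  have : Finite A := Nat.finite_of_card_ne_zero (by simp [hcard, hp.out.ne_zero])
  have hfinrank : finrank (ZMod p) (Additive A) = k := by
    apply Nat.pow_right_injective hp.out.two_le
    simpa [Nat.card_zmod] using
      (natCard_eq_pow_finrank (K := ZMod p) (V := Additive A)).symm.trans hcard
  let ρ : MulAut A →* Module.End (ZMod p) (Additive A) :=
    { toFun τ := τ.toMonoidHom.toAdditive.toZModLinearMap p
      map_one' := rfl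
      map_mul' _ _ := rfl }
  have hρ : ρ (σ ^ p ^ j) = 1 := by
    rw [map_pow]
    exact Module.End.pow_prime_pow_eq_one_of_finrank_le (m := m)
      (by rw [← map_pow, hσ, map_one]) (hfinrank ▸ hj)
  ext a
  exact congrArg Additive.toMul (LinearMap.congr_fun hρ (Additive.ofMul a))

namespace Subgroup

variable {G : Type*} [Group G]

theorem faithfulSMul_quotient_of_normalCore_eq_bot {M : Subgroup G} (h : M.normalCore = ⊥) :
    FaithfulSMul G (G ⧸ M) where
  eq_of_smul_eq_smul {g g'} hgg' := by
    have : g'⁻¹ * g ∈ M.normalCore := by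
      rw [normalCore_eq_ker, MonoidHom.mem_ker]
      ext q
      simp [mul_smul, hgg']
    rwa [h, mem_bot, inv_mul_eq_one, eq_comm] at this

theorem exists_normal_isMulCommutative_ne_bot [Group.IsSolvable G] [Nontrivial G] :
    ∃ A : Subgroup G, A.Normal ∧ IsMulCommutative A ∧ A ≠ ⊥ := by
  classical
  have hex : ∃ m, derivedSeries G m = ⊥ := Group.IsSolvable.solvable
  have hpos : 0 < Nat.find hex := by
    by_contra! h0
    have := Nat.find_spec hex
    rw [Nat.le_zero.mp h0, derivedSeries_zero] at this
    exact top_ne_bot this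
  refine ⟨derivedSeries G (Nat.find hex - 1), derivedSeries_normal G _, ?_,
    Nat.find_min hex (Nat.sub_one_lt hpos.ne')⟩
  rw [← le_centralizer_iff_isMulCommutative, ← commutator_eq_bot_iff_le_centralizer,
    ← derivedSeries_succ, Nat.sub_add_cancel hpos]
  exact Nat.find_spec hex

def torsionBy (A : Subgroup G) [IsMulCommutative A] (n : ℕ) : Subgroup G where
  carrier := {a | a ∈ A ∧ a ^ n = 1}
  one_mem' := ⟨A.one_mem, one_pow n⟩
  mul_mem' {a b} ha hb :=
    ⟨A.mul_mem ha.1 hb.1, by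
      rw [Commute.mul_pow (setLike_mul_comm ha.1 hb.1), ha.2, hb.2, one_mul]⟩
  inv_mem' ha := ⟨A.inv_mem ha.1, by rw [inv_pow, ha.2, inv_one]⟩

variable {A : Subgroup G} [IsMulCommutative A] {n : ℕ}

theorem pow_eq_one_of_mem_torsionBy {a : G} (ha : a ∈ A.torsionBy n) : a ^ n = 1 := ha.2

instance : IsMulCommutative (A.torsionBy n) :=
  ⟨⟨fun a b ↦ Subtype.ext (setLike_mul_comm a.2.1 b.2.1)⟩⟩

instance [hA : A.Normal] : (A.torsionBy n).Normal where
  conj_mem a ha g := ⟨hA.conj_mem a ha.1 g, by rw [conj_pow, ha.2, mul_one, mul_inv_cancel]⟩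

theorem torsionBy_ne_bot {p : ℕ} [hp : Fact p.Prime] [Finite A] (hdvd : p ∣ Nat.card A) :
    A.torsionBy p ≠ ⊥ := by
  obtain ⟨a, ha⟩ := exists_prime_orderOf_dvd_card' p hdvd
  rw [ne_eq, eq_bot_iff_forall]
  intro h
  have ha1 : (a : G) = 1 :=
    h a ⟨a.2, by rw [← coe_pow, ← ha, pow_orderOf_eq_one, OneMemClass.coe_one]⟩
  exact hp.out.one_lt.ne' (ha ▸ orderOf_eq_one_iff.mpr (Subtype.ext ha1))

end Subgroup

theorem MulAction.natCard_eq_of_existsUnique_smul_eq {H Ω : Type*} [SMul H Ω] [Nonempty Ω]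
    (h : ∀ α β : Ω, ∃! g : H, g • α = β) : Nat.card H = Nat.card Ω := by
  obtain ⟨ω⟩ := ‹Nonempty Ω›
  exact Nat.card_eq_of_bijective (· • ω)
    ⟨fun g g' hgg' ↦ (h ω (g' • ω)).unique hgg' rfl, fun β ↦ (h ω β).exists⟩

section

variable {G Ω : Type*} [Group G] [MulAction G Ω]

theorem IsTwoTransitive.isMultiplyPretransitive (h : IsTwoTransitive G Ω) :
    IsMultiplyPretransitive G Ω 2 :=
  is_two_pretransitive_iff.mpr fun hab hcd ↦ h _ _ _ _ hab hcd

theorem IsTwoTransitive.isPretransitive_of_normal [FaithfulSMul G Ω] (h : IsTwoTransitive G Ω)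
    {N : Subgroup G} [N.Normal] (hN : N ≠ ⊥) : IsPretransitive N Ω := by
  have := isPreprimitive_of_is_two_pretransitive h.isMultiplyPretransitive
  refine IsQuasiPreprimitive.isPretransitive_of_normal fun hfix ↦ hN ?_
  rw [Subgroup.eq_bot_iff_forall]
  intro a ha
  refine eq_of_smul_eq_smul (α := Ω) fun ω ↦ ?_
  rw [one_smul]
  exact (Set.eq_univ_iff_forall.mp hfix ω) ⟨a, ha⟩

namespace Subgroup

variable [FaithfulSMul G Ω] {N : Subgroup G} [IsPretransitive N Ω]

theorem eq_one_of_mem_centralizer_of_smul_eq {c : G} (hc : c ∈ centralizer N) {ω : Ω}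
    (hcω : c • ω = ω) : c = 1 := by
  refine eq_of_smul_eq_smul (α := Ω) fun ω' ↦ ?_
  obtain ⟨a, rfl⟩ := MulAction.exists_smul_eq N ω ω'
  rw [one_smul, smul_def, ← mul_smul, ← mem_centralizer_iff.mp hc a a.2, mul_smul, hcω]

theorem natCard_eq_of_isPretransitive [IsMulCommutative N] [Nonempty Ω] :
    Nat.card N = Nat.card Ω := by
  obtain ⟨ω⟩ := ‹Nonempty Ω›
  have : stabilizer N ω = ⊥ := by
    rw [eq_bot_iff_forall]
    intro a ha
    exact Subtype.ext (eq_one_of_mem_centralizer_of_smul_eq (le_centralizer N a.2) ha)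
  rw [← index_stabilizer_of_transitive N ω, this, index_bot]

end Subgroup

end

theorem Subgroup.centralizer_le_of_isPretransitive {G : Type*} [Group G] (Ω : Type*)
    [MulAction G Ω] [FaithfulSMul G Ω] [Nonempty Ω] {N : Subgroup G} [IsMulCommutative N]
    [IsPretransitive N Ω] : centralizer N ≤ N := by
  intro c hc
  obtain ⟨ω⟩ := ‹Nonempty Ω›
  obtain ⟨a, ha⟩ := MulAction.exists_smul_eq N (c • ω) ω
  have hac : (a : G) * c = 1 :=
    eq_one_of_mem_centralizer_of_smul_eq (mul_mem (le_centralizer N a.2) hc) (ω := ω)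
      (by rwa [mul_smul])
  rw [eq_inv_of_mul_eq_one_right hac]
  exact inv_mem a.2

theorem Subgroup.pow_prime_pow_mem_centralizer {X : Type*} [Group X] {p : ℕ} [Fact p.Prime]
    {N : Subgroup X} [N.Normal] [IsMulCommutative N] (hexp : ∀ a ∈ N, a ^ p = 1) {k : ℕ}
    (hcard : Nat.card N = p ^ k) {x : X} {m j : ℕ} (hx : x ^ p ^ m = 1) (hj : k ≤ p ^ j) :
    x ^ p ^ j ∈ centralizer N := by
  have hconj : MulAut.conjNormal (x ^ p ^ j) = (1 : MulAut N) := by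
    rw [map_pow]
    refine MulAut.pow_prime_pow_eq_one_of_natCard_eq (m := m)
      (fun a ↦ Subtype.ext (hexp a a.2)) hcard ?_ hj
    rw [← map_pow, hx, map_one]
  rw [mem_centralizer_iff]
  intro a ha
  have h := congrArg Subtype.val (DFunLike.congr_fun hconj ⟨a, ha⟩)
  rw [MulAut.conjNormal_apply, MulAut.one_apply, mul_inv_eq_iff_eq_mul] at h
  exact h.symm

theorem Subgroup.pow_prime_pow_succ_eq_one_of_isPretransitive {X Ω : Type*} [Group X]
    [MulAction X Ω] [FaithfulSMul X Ω] [Nonempty Ω] {p : ℕ} [Fact p.Prime] {N : Subgroup X}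
    [N.Normal] [IsMulCommutative N] [IsPretransitive N Ω] (hexp : ∀ a ∈ N, a ^ p = 1) {k : ℕ}
    (hdeg : Nat.card Ω = p ^ k) {x : X} {m j : ℕ} (hx : x ^ p ^ m = 1) (hj : k ≤ p ^ j) :
    x ^ p ^ (j + 1) = 1 := by
  have hcard : Nat.card N = p ^ k := (natCard_eq_of_isPretransitive (Ω := Ω)).trans hdeg
  have hmem : x ^ p ^ j ∈ N :=
    centralizer_le_of_isPretransitive Ω (pow_prime_pow_mem_centralizer hexp hcard hx hj)
  rw [pow_succ, pow_mul]
  exact hexp _ hmem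

theorem IsTwoTransitive.exists_normal_isPretransitive_pow_eq_one {X Ω : Type*} [Group X]
    [Group.IsSolvable X] [MulAction X Ω] [FaithfulSMul X Ω] (h : IsTwoTransitive X Ω)
    {p k : ℕ} [hp : Fact p.Prime] (hdeg : Nat.card Ω = p ^ k) (hk : k ≠ 0) :
    ∃ N : Subgroup X, N.Normal ∧ IsMulCommutative N ∧ IsPretransitive N Ω ∧
      ∀ a ∈ N, a ^ p = 1 := by
  have : Finite Ω := Nat.finite_of_card_ne_zero (by simp [hdeg, hp.out.ne_zero])
  have : Nontrivial Ω :=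
    Finite.one_lt_card_iff_nontrivial.mp (hdeg ▸ Nat.one_lt_pow hk hp.out.one_lt)
  obtain ⟨α, β, hαβ⟩ := exists_pair_ne Ω
  have : Nontrivial X := by
    obtain ⟨g, hg, -⟩ := h α β β α hαβ hαβ.symm
    exact nontrivial_of_ne g 1 fun hg1 ↦ hαβ (by rw [← hg, hg1, one_smul])
  obtain ⟨A, hA, hAcomm, hAbot⟩ := Subgroup.exists_normal_isMulCommutative_ne_bot (G := X)
  have := h.isPretransitive_of_normal hAbot
  have hAcard : Nat.card A = p ^ k := (Subgroup.natCard_eq_of_isPretransitive (Ω := Ω)).trans hdeg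
  have : Finite A := Nat.finite_of_card_ne_zero (by simp [hAcard, hp.out.ne_zero])
  have hN : A.torsionBy p ≠ ⊥ := Subgroup.torsionBy_ne_bot (hAcard ▸ dvd_pow_self p hk)
  exact ⟨A.torsionBy p, inferInstance, inferInstance, h.isPretransitive_of_normal hN,
    fun _ ↦ Subgroup.pow_eq_one_of_mem_torsionBy⟩

theorem Nat.le_two_pow_sub_two {k : ℕ} (hk : 4 ≤ k) : k ≤ 2 ^ (k - 2) := by
  induction k, hk using Nat.le_induction with
  | base => norm_num
  | succ m hm ih =>
    rw [show m + 1 - 2 = m - 2 + 1 by omega, pow_succ]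
    omega

theorem stmt9_general {X : Type*} [Group X] (hsolv : IsSolvable X)
    (M : Subgroup X)
    (hfaith : M.normalCore = ⊥)
    (h2trans : IsTwoTransitive X (X ⧸ M))
    (n : ℕ) (hn : 2 ≤ n) (G : Subgroup X) (hSD : IsSemidihedral n G)
    (hreg : ∀ α β : X ⧸ M, ∃! g : G, (g : X) • α = β)
    (p k : ℕ) (hp : p.Prime) (hpk : M.index = p ^ k) :
    ∀ x : X, orderOf x ≠ p ^ k := by
  have : Group.IsSolvable X := hsolv
  have := Subgroup.faithfulSMul_quotient_of_normalCore_eq_bot hfaith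
  have hdeg : Nat.card (X ⧸ M) = p ^ k := hpk
  have h8n : 8 * n = p ^ k := by
    rw [← hSD.1, natCard_eq_of_existsUnique_smul_eq hreg, hdeg]
  have h2 : 2 ∣ p ^ k := h8n ▸ Dvd.intro (4 * n) (by ring)
  obtain rfl : p = 2 :=
    ((Nat.prime_dvd_prime_iff_eq Nat.prime_two hp).mp (Nat.prime_two.dvd_of_dvd_pow h2)).symm
  have hk : 4 ≤ k := (Nat.pow_le_pow_iff_right Nat.one_lt_two).mp (by omega : 2 ^ 4 ≤ 2 ^ k)
  obtain ⟨N, _, _, _, hexp⟩ :=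
    h2trans.exists_normal_isPretransitive_pow_eq_one hdeg (by omega)
  intro x hx
  have hx' : x ^ 2 ^ (k - 2 + 1) = 1 :=
    Subgroup.pow_prime_pow_succ_eq_one_of_isPretransitive hexp hdeg (hx ▸ pow_orderOf_eq_one x)
      (Nat.le_two_pow_sub_two hk)
  have := orderOf_dvd_of_pow_eq_one hx'
  rw [hx, Nat.pow_dvd_pow_iff_le_right Nat.one_lt_two] at this
  omega

theorem stmt9 {X : Type*} [Group X] [Finite X] (hsolv : IsSolvable X)
    (M : Subgroup X)
    (hfaith : M.normalCore = ⊥)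
    (h2trans : IsTwoTransitive X (X ⧸ M))
    (hcomp : 1 < M.index ∧ ¬ (M.index).Prime)
    (n : ℕ) (hn : 2 ≤ n) (G : Subgroup X) (hSD : IsSemidihedral n G)
    (hreg : ∀ α β : X ⧸ M, ∃! g : G, (g : X) • α = β)
    (p k : ℕ) (hp : p.Prime) (hpk : M.index = p ^ k) :
    ∀ x : X, orderOf x ≠ p ^ k :=
  stmt9_general hsolv M hfaith h2trans n hn G hSD hreg p k hp hpk
end

section
/- There is no finite solvable group X = G⟨c⟩ with G ≅ SD_{8n} (n ≥ 2), ⟨c⟩ cyclic with G ∩ ⟨c⟩ = 1 and ⟨c⟩ core-free in X, such that the action of X on the cosets [X : ⟨c⟩] is 2-transitive of composite degree. -/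
/-!
Let `d = |X : ⟨c⟩|` be the degree. The point stabiliser `⟨c⟩` is abelian and transitive on the
other `d - 1` points, hence regular on them, so `|⟨c⟩| = d - 1`. Solvability gives a nontrivial
abelian normal subgroup `N`; 2-transitivity makes it transitive, hence regular, so `|N| = d` and
`|X : N| = d - 1`. The complement `G` of `⟨c⟩` has order `d`, coprime to `|X : N|`, so `G ≤ N`
would be abelian, which `SD_{8n}` is not for `n ≥ 2`.
-/

open Pointwise

open MulAction

namespace Subgroup

variable {X : Type*} [Group X]

theorem faithfulSMul_quotient_of_normalCore_eq_bot_s10 {H : Subgroup X} (hH : H.normalCore = ⊥) :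
    FaithfulSMul X (X ⧸ H) where
  eq_of_smul_eq_smul {g₁ g₂} h := by
    have hcore : g₁⁻¹ * g₂ ∈ H.normalCore := fun b => by
      simpa [mul_assoc] using QuotientGroup.eq.mp (h (b⁻¹ : X))
    rwa [hH, mem_bot, inv_mul_eq_one] at hcore

theorem le_of_coprime_card_index {G N : Subgroup X} [N.Normal]
    (h : (Nat.card G).Coprime N.index) : G ≤ N := by
  have hdvd_card : Nat.card (G.map (QuotientGroup.mk' N)) ∣ Nat.card G := G.card_map_dvd _
  have hdvd_index : Nat.card (G.map (QuotientGroup.mk' N)) ∣ N.index := by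
    rw [N.index_eq_card]
    exact card_subgroup_dvd_card _
  have hbot : G.map (QuotientGroup.mk' N) = ⊥ :=
    eq_bot_of_card_eq _ (Nat.eq_one_of_dvd_coprimes h hdvd_card hdvd_index)
  rwa [map_eq_bot_iff, QuotientGroup.ker_mk'] at hbot

end Subgroup

theorem Group.IsSolvable.exists_normal_isMulCommutative_ne_bot {X : Type*} [Group X]
    [Nontrivial X] (hX : Group.IsSolvable X) :
    ∃ N : Subgroup X, N.Normal ∧ IsMulCommutative N ∧ N ≠ ⊥ := by
  classical
  have hex : ∃ k, derivedSeries X k = ⊥ := hX.solvable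
  have hpos : Nat.find hex ≠ 0 := fun h0 =>
    top_ne_bot (α := Subgroup X) (by simpa [h0] using Nat.find_spec hex)
  obtain ⟨k, hk⟩ := Nat.exists_eq_add_one_of_ne_zero hpos
  refine ⟨derivedSeries X k, derivedSeries_normal X k, ?_, Nat.find_min hex (by omega)⟩
  rw [← Subgroup.commutator_self_eq_bot_iff, ← derivedSeries_succ, ← hk]
  exact Nat.find_spec hex

theorem IsSemidihedral.not_isMulCommutative {n : ℕ} {G : Type*} [Group G]
    (hG : IsSemidihedral n G) (hn : 2 ≤ n) : ¬ IsMulCommutative G := by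
  intro hcomm
  obtain ⟨-, a, b, ha, -, hrel, -⟩ := hG
  have hpow : a ^ (2 * n - 1) = a ^ 1 := by
    rw [← hrel, mul_comm' b⁻¹ a, inv_mul_cancel_right, pow_one]
  have hmod := pow_eq_pow_iff_modEq.mp hpow
  rw [ha, Nat.ModEq, Nat.mod_eq_of_lt (by omega), Nat.mod_eq_of_lt (by omega)] at hmod
  omega

namespace MulAction

variable {K Ω : Type*} [Group K] [MulAction K Ω]

theorem stabilizer_eq_bot_of_isMulCommutative [IsMulCommutative K] [FaithfulSMul K Ω]
    [IsPretransitive K Ω] (x : Ω) : stabilizer K x = ⊥ := by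
  refine eq_bot_iff.mpr fun k hk =>
    Subgroup.mem_bot.mpr (eq_of_smul_eq_smul (α := Ω) fun y => ?_)
  obtain ⟨p, rfl⟩ := exists_smul_eq K x y
  rw [smul_smul, mul_comm' k p, mul_smul, mem_stabilizer_iff.mp hk, one_smul]

theorem card_eq_card_of_stabilizer_eq_bot [IsPretransitive K Ω] {x : Ω}
    (hx : stabilizer K x = ⊥) : Nat.card K = Nat.card Ω := by
  rw [← Subgroup.index_bot, ← hx, index_stabilizer_of_transitive]

end MulAction

theorem SubMulAction.faithfulSMul_ofStabilizer {X Ω : Type*} [Group X] [MulAction X Ω]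
    [FaithfulSMul X Ω] (a : Ω) : FaithfulSMul (stabilizer X a) (ofStabilizer X a) where
  eq_of_smul_eq_smul {h₁ h₂} h := Subtype.ext <| eq_of_smul_eq_smul fun ω => by
    by_cases hω : ω = a
    · subst hω
      rw [mem_stabilizer_iff.mp h₁.2, mem_stabilizer_iff.mp h₂.2]
    · exact congrArg Subtype.val (h ⟨ω, hω⟩)

namespace IsTwoTransitive

variable {X Ω : Type*} [Group X] [MulAction X Ω]

theorem isPretransitive_ofStabilizer (h : IsTwoTransitive X Ω) (a : Ω) :
    IsPretransitive (stabilizer X a) (SubMulAction.ofStabilizer X a) where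
  exists_smul_eq β γ := by
    obtain ⟨g, hga, hgβ⟩ := h a β a γ (Ne.symm β.2) (Ne.symm γ.2)
    exact ⟨⟨g, hga⟩, Subtype.ext hgβ⟩

theorem card_stabilizer_add_one (h : IsTwoTransitive X Ω) [FaithfulSMul X Ω] [Finite Ω]
    [Nontrivial Ω] (a : Ω) [IsMulCommutative (stabilizer X a)] :
    Nat.card (stabilizer X a) + 1 = Nat.card Ω := by
  have := h.isPretransitive_ofStabilizer a
  have := SubMulAction.faithfulSMul_ofStabilizer (X := X) a
  obtain ⟨β, hβ⟩ := exists_ne a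
  rw [card_eq_card_of_stabilizer_eq_bot (stabilizer_eq_bot_of_isMulCommutative
    (⟨β, hβ⟩ : SubMulAction.ofStabilizer X a)), SubMulAction.nat_card_ofStabilizer_add_one_eq]

theorem isPretransitive_of_normal_s10 (h : IsTwoTransitive X Ω) [FaithfulSMul X Ω]
    {N : Subgroup X} [N.Normal] (hN : N ≠ ⊥) : IsPretransitive N Ω where
  exists_smul_eq β γ := by
    obtain ⟨g, hg⟩ := Subgroup.ne_bot_iff_exists_ne_one.mp hN
    obtain ⟨α, hα⟩ : ∃ α : Ω, g • α ≠ α := by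
      by_contra! hfix
      exact hg (eq_of_smul_eq_smul (α := Ω) fun α => by rw [hfix, one_smul])
    by_cases hβγ : β = γ
    · exact ⟨1, by rw [one_smul, hβγ]⟩
    obtain ⟨x, hxα, hxgα⟩ := h α (g • α) β γ (Ne.symm hα) hβγ
    refine ⟨⟨x * g * x⁻¹, ‹N.Normal›.conj_mem g g.2 x⟩, ?_⟩
    rw [← hxα, Subgroup.mk_smul, smul_smul, inv_mul_cancel_right, mul_smul, ← hxgα]
    rfl

theorem card_normal_eq_of_isMulCommutative (h : IsTwoTransitive X Ω) [FaithfulSMul X Ω]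
    [Nonempty Ω] {N : Subgroup X} [N.Normal] [IsMulCommutative N] (hN : N ≠ ⊥) :
    Nat.card N = Nat.card Ω := by
  have := h.isPretransitive_of_normal_s10 hN
  exact card_eq_card_of_stabilizer_eq_bot
    (stabilizer_eq_bot_of_isMulCommutative (Classical.arbitrary Ω))

end IsTwoTransitive

theorem stmt10_general {X : Type*} [Group X] [Finite X] (hsolv : IsSolvable X)
    (G : Subgroup X) (c : X) (n : ℕ) (hn : 2 ≤ n) (hSD : IsSemidihedral n G)
    (hprod : (G : Set X) * (Subgroup.zpowers c : Set X) = Set.univ)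
    (hint : G ⊓ Subgroup.zpowers c = ⊥)
    (hcore : (Subgroup.zpowers c).normalCore = ⊥)
    (h2trans : IsTwoTransitive X (X ⧸ Subgroup.zpowers c)) :
    False := by
  set H := Subgroup.zpowers c
  have hcardG : Nat.card G = H.index := (Subgroup.isComplement'_of_disjoint_and_mul_eq_univ
    (disjoint_iff.mpr hint) hprod).index_eq_card.symm
  have := Subgroup.faithfulSMul_quotient_of_normalCore_eq_bot_s10 hcore
  have : Nontrivial (X ⧸ H) := by
    rw [← Finite.one_lt_card_iff_nontrivial, ← H.index_eq_card, ← hcardG, hSD.1]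
    omega
  have : Nontrivial X := (QuotientGroup.mk_surjective (s := H)).nontrivial
  have hcardH : Nat.card H + 1 = H.index := by
    have : IsMulCommutative (stabilizer X ((1 : X) : X ⧸ H)) := by
      rw [stabilizer_quotient]
      infer_instance
    simpa [stabilizer_quotient, ← H.index_eq_card] using
      h2trans.card_stabilizer_add_one ((1 : X) : X ⧸ H)
  obtain ⟨N, _, _, hNbot⟩ := Group.IsSolvable.exists_normal_isMulCommutative_ne_bot hsolv
  have hcardN : Nat.card N = H.index := by
    rw [h2trans.card_normal_eq_of_isMulCommutative hNbot, H.index_eq_card]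
  have hNindex : N.index = Nat.card H := by
    have hX := N.card_mul_index.trans H.card_mul_index.symm
    rw [hcardN, mul_comm] at hX
    exact Nat.eq_of_mul_eq_mul_right (by omega) hX
  have hGN : G ≤ N := Subgroup.le_of_coprime_card_index (by
    rw [hNindex, hcardG, ← hcardH]
    exact Nat.coprime_self_add_left.mpr (Nat.coprime_one_left _))
  exact hSD.not_isMulCommutative hn
    (.of_setLike_mul_comm fun a ha b hb => setLike_mul_comm (hGN ha) (hGN hb))

theorem stmt10 {X : Type*} [Group X] [Finite X] (hsolv : IsSolvable X)
    (G : Subgroup X) (c : X) (n : ℕ) (hn : 2 ≤ n) (hSD : IsSemidihedral n G)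
    (hprod : (G : Set X) * (Subgroup.zpowers c : Set X) = Set.univ)
    (hint : G ⊓ Subgroup.zpowers c = ⊥)
    (hcore : (Subgroup.zpowers c).normalCore = ⊥)
    (h2trans : IsTwoTransitive X (X ⧸ Subgroup.zpowers c))
    (hcomp : 1 < (Subgroup.zpowers c).index ∧ ¬ (Subgroup.zpowers c).index.Prime) :
    False :=
  stmt10_general hsolv G c n hn hSD hprod hint hcore h2trans
end

section
/- Let X = G⟨c⟩ with G = ⟨a, b⟩ ≅ SD_{8n} (n ≥ 2), ⟨c⟩ cyclic, G ∩ ⟨c⟩ = 1, the core of ⟨c⟩ in X trivial, ⟨a⟩⟨c⟩ ≤ X, and suppose ⟨a⟩ is normal in X. Then c² normalizes G; moreover, if b normalizes the subgroup ⟨a²⟩⟨c⟩, then G is normal in X. -/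
/-!
Write `A = ⟨a⟩` and `G = ⟨a, b⟩ = A ∪ Ab`. From `X = G⟨c⟩` and `G ∩ ⟨c⟩ = 1` one gets
`b c b⁻¹ = x c d` with `x ∈ A` and `d ∈ ⟨c⟩`. Since `Aut A` is abelian, commutators centralize `A`,
and hence so does `d`. Conjugating the identity by `b` once more and using `b² = 1` gives
`d · b d b⁻¹ = c⁻¹ x^(-2n) c ∈ A`, so `b d^k b⁻¹ = d^(-k)` whenever `x^(2nk) = 1`. Then
`⟨d^k⟩ ≤ ⟨c⟩` is normalized by `a`, `b` and `c`, so it is normal in `X` and therefore trivial,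
`⟨c⟩` being core-free. For `k = 2` this gives `d² = 1`, so `b c² b⁻¹ ∈ A c²` and `c²` normalizes
`G`. If `b` normalizes `⟨a²⟩⟨c⟩` then `x ∈ ⟨a²⟩`, so already `d = 1`, `b c b⁻¹ ∈ A c`, and `c`
normalizes `G`; as `X = G⟨c⟩`, `G` is normal.
-/

open Pointwise Subgroup
open scoped commutatorElement

namespace Subgroup

variable {G : Type*} [Group G]

theorem commutator_le_centralizer_of_isCyclic (H : Subgroup G) [H.Normal] [IsCyclic H] :
    _root_.commutator G ≤ centralizer (H : Set G) := by
  let _ := (IsCyclic.mulAutMulEquiv H).toMonoidHom.commGroupOfInjective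
    (IsCyclic.mulAutMulEquiv H).injective
  have h := Abelianization.commutator_subset_ker H.normalizerMonoidHom
  rwa [normalizerMonoidHom_ker, normalizer_eq_top, ← map_subtype_le_map_subtype,
    map_subtype_commutator, map_subgroupOf_eq_of_le le_top] at h

theorem mem_normalizer_closure_of_conj_mem [Finite G] {s : Set G} {x : G}
    (h : ∀ g ∈ s, x * g * x⁻¹ ∈ closure s) : x ∈ normalizer (closure s : Set G) :=
  mem_normalizer_fintype fun _ hg =>
    (closure_le ((closure s).comap (MulAut.conj x).toMonoidHom)).2 h hg

theorem eq_top_of_mul_eq_univ {H K N : Subgroup G} (hH : H ≤ N) (hK : K ≤ N)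
    (h : (H : Set G) * (K : Set G) = Set.univ) : N = ⊤ :=
  eq_top_iff.2 fun x _ => by
    obtain ⟨y, hy, z, hz, rfl⟩ := h.symm ▸ Set.mem_univ x
    exact mul_mem (hH hy) (hK hz)

end Subgroup

section

variable {X : Type*} [Group X]

theorem mem_zpowers_or_mul_mem_zpowers_of_mem_closure {a b g : X} (hA : (zpowers a).Normal)
    (hb : b * b = 1) (hg : g ∈ closure {a, b}) : g ∈ zpowers a ∨ g * b ∈ zpowers a := by
  have hbinv : b⁻¹ = b := inv_eq_of_mul_eq_one_right hb
  have conj {y : X} (hy : y ∈ zpowers a) : b * y * b ∈ zpowers a := by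
    simpa [hbinv] using hA.conj_mem y hy b
  induction hg using closure_induction with
  | mem g hg =>
    rcases hg with rfl | rfl
    · exact .inl (mem_zpowers g)
    · exact .inr (hb ▸ one_mem _)
  | one => exact .inl (one_mem _)
  | mul g h _ _ hg hh =>
    rcases hg with hg | hg <;> rcases hh with hh | hh
    · exact .inl (mul_mem hg hh)
    · exact .inr (mul_assoc g h b ▸ mul_mem hg hh)
    · refine .inr ?_
      convert mul_mem hg (conj hh) using 1
      rw [show g * b * (b * h * b) = g * (b * b) * h * b by group, hb, mul_one]
    · refine .inl ?_
      convert mul_mem hg (conj hh) using 1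
      rw [show g * b * (b * (h * b) * b) = g * (b * b) * h * (b * b) by group, hb, mul_one,
        mul_one]
  | inv g _ hg =>
    rcases hg with hg | hg
    · exact .inl (inv_mem hg)
    · refine .inr ?_
      convert conj (inv_mem hg) using 1
      group

theorem notMem_zpowers_of_conj_eq_pow {a b : X} {n : ℕ} (hn : 2 ≤ n) (ha : orderOf a = 4 * n)
    (hab : b⁻¹ * a * b = a ^ (2 * n - 1)) : b ∉ zpowers a := by
  rintro ⟨k, rfl⟩
  have h : a ^ (2 * n - 1) = a ^ 1 := by rw [← hab, pow_one]; group
  rw [pow_eq_pow_iff_modEq, ha, Nat.ModEq, Nat.mod_eq_of_lt (by omega),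
    Nat.mod_eq_of_lt (by omega)] at h
  omega

theorem conj_mul_self_eq_pow {a b x : X} {n : ℕ} (hn : 1 ≤ n)
    (hab : b * a * b⁻¹ = a ^ (2 * n - 1)) (hx : x ∈ zpowers a) :
    b * x * b⁻¹ * x = x ^ (2 * n) := by
  obtain ⟨k, rfl⟩ := mem_zpowers_iff.mp hx
  rw [← MulAut.conj_apply, map_zpow, MulAut.conj_apply, hab, ← zpow_natCast, ← zpow_natCast,
    ← zpow_mul, ← zpow_add, ← zpow_mul]
  congr 1
  push_cast [show 1 ≤ 2 * n by omega]
  ring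

theorem pow_eq_one_of_mem_zpowers {g x : X} {k : ℕ} (hx : x ∈ zpowers g) (hg : g ^ k = 1) :
    x ^ k = 1 :=
  orderOf_dvd_iff_pow_eq_one.1 <|
    (orderOf_dvd_of_mem_zpowers hx).trans (orderOf_dvd_of_pow_eq_one hg)

theorem exists_conj_eq_mul_mul {a b c : X} (hA : (zpowers a).Normal) (hb : b * b = 1)
    (hba : b ∉ zpowers a) (hprod : (closure {a, b} : Set X) * (zpowers c : Set X) = Set.univ)
    (hint : closure {a, b} ⊓ zpowers c = ⊥) :
    ∃ x ∈ zpowers a, ∃ d ∈ zpowers c, b * c * b⁻¹ = x * c * d := by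
  obtain ⟨g, hg, z, hz, hgz : g * z = b * c * b⁻¹⟩ := hprod.symm ▸ Set.mem_univ (b * c * b⁻¹)
  refine ⟨g, ?_, c⁻¹ * z, mul_mem (inv_mem (mem_zpowers c)) hz, by rw [← hgz]; group⟩
  refine (mem_zpowers_or_mul_mem_zpowers_of_mem_closure hA hb hg).resolve_right fun hgb => hba ?_
  -- if `g ∈ ⟨a⟩b` then `b ∈ ⟨a⟩⟨c⟩`, and its `⟨c⟩`-part lies in `G ∩ ⟨c⟩ = 1`
  set y := c⁻¹ * (b * (g * b) * b⁻¹) * c with hy_def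
  have hy : y ∈ zpowers a := by simpa using hA.conj_mem _ (hA.conj_mem _ hgb b) c⁻¹
  have hbyz : b = y * (c⁻¹ * z) := by
    calc b = b⁻¹ := (inv_eq_of_mul_eq_one_right hb).symm
      _ = c⁻¹ * (b * b) * c * b⁻¹ := by rw [hb]; group
      _ = c⁻¹ * b * (g * z) := by rw [hgz]; group
      _ = y * (c⁻¹ * z) := by rw [hy_def]; group
  have hG : zpowers a ≤ closure {a, b} := zpowers_le.2 (subset_closure (by simp))
  have hz' : c⁻¹ * z ∈ closure {a, b} ⊓ zpowers c := by
    refine mem_inf.2 ⟨?_, mul_mem (inv_mem (mem_zpowers c)) hz⟩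
    rw [show c⁻¹ * z = y⁻¹ * b by rw [hbyz]; group]
    exact mul_mem (inv_mem (hG hy)) (subset_closure (by simp))
  rw [hint, mem_bot] at hz'
  rwa [hbyz, hz', mul_one]

theorem mem_centralizer_of_conj_eq_mul_mul {a b c x d : X} [(zpowers a).Normal]
    (hx : x ∈ zpowers a) (h : b * c * b⁻¹ = x * c * d) :
    d ∈ centralizer (zpowers a : Set X) := by
  have hd : d = (c⁻¹ * x⁻¹ * c⁻¹⁻¹) * ⁅c⁻¹, b⁆ := by
    rw [commutatorElement_def, inv_inv, show d = c⁻¹ * x⁻¹ * (x * c * d) by group, ← h]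
    group
  rw [hd]
  exact mul_mem (le_centralizer (H := zpowers a) (Normal.conj_mem ‹_› _ (inv_mem hx) _))
    (commutator_le_centralizer_of_isCyclic _ (commutator_mem_commutator (mem_top _) (mem_top _)))

theorem mul_conj_eq_of_conj_eq_mul_mul {b c x d : X} (hb : b * b = 1)
    (h : b * c * b⁻¹ = x * c * d) :
    d * (b * d * b⁻¹) = c⁻¹ * (b * x * b⁻¹ * x)⁻¹ * c := by
  have hc : c = b * x * b⁻¹ * (x * c * d) * (b * d * b⁻¹) := by
    calc c = (b * b) * c * (b * b)⁻¹ := by rw [hb]; group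
      _ = b * (b * c * b⁻¹) * b⁻¹ := by group
      _ = b * (x * c * d) * b⁻¹ := by rw [h]
      _ = b * x * b⁻¹ * (b * c * b⁻¹) * (b * d * b⁻¹) := by group
      _ = b * x * b⁻¹ * (x * c * d) * (b * d * b⁻¹) := by rw [h]
  calc d * (b * d * b⁻¹)
      = c⁻¹ * (b * x * b⁻¹ * x)⁻¹ * (b * x * b⁻¹ * (x * c * d) * (b * d * b⁻¹)) := by group
    _ = c⁻¹ * (b * x * b⁻¹ * x)⁻¹ * c := by rw [← hc]

theorem conj_pow_eq_inv_of_commute {b d e : X} (he : d * (b * d * b⁻¹) = e) (hde : Commute d e)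
    {k : ℕ} (hk : e ^ k = 1) : b * d ^ k * b⁻¹ = (d ^ k)⁻¹ := by
  have hconj : b * d * b⁻¹ = d⁻¹ * e := by rw [← he]; group
  rw [← conj_pow, hconj, hde.inv_left.mul_pow, hk, mul_one, inv_pow]

theorem conj_pow_eq_inv {a b c x d : X} {n k : ℕ} [(zpowers a).Normal] (hb : b * b = 1)
    (hn : 1 ≤ n) (hab : b * a * b⁻¹ = a ^ (2 * n - 1)) (hx : x ∈ zpowers a)
    (hd : d ∈ centralizer (zpowers a : Set X)) (h : b * c * b⁻¹ = x * c * d)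
    (hk : (x ^ (2 * n)) ^ k = 1) : b * d ^ k * b⁻¹ = (d ^ k)⁻¹ := by
  have he : c⁻¹ * (x ^ (2 * n))⁻¹ * c⁻¹⁻¹ ∈ zpowers a :=
    Normal.conj_mem ‹_› _ (inv_mem (pow_mem hx _)) _
  rw [inv_inv] at he
  refine conj_pow_eq_inv_of_commute ?_ (mem_centralizer_iff.1 hd _ he).symm ?_
  · rw [mul_conj_eq_of_conj_eq_mul_mul hb h, conj_mul_self_eq_pow hn hab hx]
  · have hconj := conj_pow (a := c⁻¹) (b := (x ^ (2 * n))⁻¹) (i := k)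
    rw [inv_inv] at hconj
    rw [hconj, inv_pow, hk, inv_one, mul_one, inv_mul_cancel]

theorem eq_one_of_mem_zpowers_of_normalCore_eq_bot [Finite X] {a b c y : X}
    (hprod : (closure {a, b} : Set X) * (zpowers c : Set X) = Set.univ)
    (hcore : (zpowers c).normalCore = ⊥) (hy : y ∈ zpowers c) (hay : Commute a y)
    (hby : b * y * b⁻¹ = y⁻¹) : y = 1 := by
  have conj_mem {g : X} (hg : g * y * g⁻¹ ∈ zpowers y) : g ∈ normalizer (zpowers y : Set X) := by
    rw [zpowers_eq_closure]
    exact mem_normalizer_closure_of_conj_mem (by simpa [← zpowers_eq_closure])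
  have hcy : Commute c y := by
    obtain ⟨k, rfl⟩ := mem_zpowers_iff.1 hy
    exact Commute.zpow_right (Commute.refl c) k
  have : (zpowers y).Normal := by
    refine normalizer_eq_top_iff.1 (eq_top_of_mul_eq_univ ?_ ?_ hprod)
    · rw [closure_le, Set.insert_subset_iff, Set.singleton_subset_iff]
      constructor
      · exact conj_mem (by rw [hay.eq, mul_inv_cancel_right]; exact mem_zpowers y)
      · exact conj_mem (by rw [hby]; exact inv_mem (mem_zpowers y))
    · exact zpowers_le.2 (conj_mem (by rw [hcy.eq, mul_inv_cancel_right]; exact mem_zpowers y))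
  have hle := normal_le_normalCore.2 (zpowers_le.2 hy)
  rw [hcore] at hle
  simpa using hle (mem_zpowers y)

theorem mem_normalizer_closure_pair_of_conj_eq [Finite X] {a b w y : X}
    (hA : (zpowers a).Normal) (hy : y ∈ zpowers a) (h : b * w * b⁻¹ = y * w) :
    w ∈ normalizer (closure {a, b} : Set X) := by
  have hG : zpowers a ≤ closure {a, b} := zpowers_le.2 (subset_closure (by simp))
  rw [← inv_mem_iff]
  apply mem_normalizer_closure_of_conj_mem
  simp only [Set.forall_mem_insert, Set.mem_singleton_iff, forall_eq]
  constructor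
  · exact hG (hA.conj_mem _ (mem_zpowers a) _)
  · rw [show w⁻¹ * b * w⁻¹⁻¹ = w⁻¹ * y * w⁻¹⁻¹ * b by
      rw [inv_inv, mul_assoc w⁻¹ b w, show b * w = y * w * b by rw [← h]; group]; group]
    exact mul_mem (hG (hA.conj_mem _ hy _)) (subset_closure (by simp))

theorem conj_sq_eq_of_conj_eq_mul_mul {b c x d : X} (hdx : Commute d x) (hdc : Commute d c)
    (hd : d ^ 2 = 1) (h : b * c * b⁻¹ = x * c * d) :
    b * c ^ 2 * b⁻¹ = x * (c * x * c⁻¹) * c ^ 2 := by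
  rw [← conj_pow, h, (hdx.mul_right hdc).symm.mul_pow, hd, mul_one, pow_two, pow_two]
  group

theorem mem_zpowers_sq_of_conj_eq_mul_mul {a b c x d : X} {M : Subgroup X}
    (hM : (M : Set X) = (zpowers (a ^ 2) : Set X) * (zpowers c : Set X))
    (hbM : b ∈ normalizer (M : Set X)) (hint : closure {a, b} ⊓ zpowers c = ⊥)
    (hx : x ∈ zpowers a) (hd : d ∈ zpowers c) (h : b * c * b⁻¹ = x * c * d) :
    x ∈ zpowers (a ^ 2) := by
  have hcM : c ∈ (M : Set X) := hM ▸ ⟨1, one_mem _, c, mem_zpowers c, one_mul c⟩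
  have hbcM : b * c * b⁻¹ ∈ (M : Set X) := (mem_normalizer_iff.1 hbM c).1 hcM
  rw [hM, h] at hbcM
  obtain ⟨y, hy, w, hw, hyw : y * w = x * c * d⟩ := hbcM
  have hA : zpowers a ≤ closure {a, b} := zpowers_le.2 (subset_closure (by simp))
  have hA2 : zpowers (a ^ 2) ≤ zpowers a := zpowers_le.2 (pow_mem (mem_zpowers a) 2)
  have hxy := mul_injective_of_disjoint (disjoint_iff.2 hint)
    (a₁ := (⟨x, hA hx⟩, ⟨c * d, mul_mem (mem_zpowers c) hd⟩)) (a₂ := (⟨y, hA (hA2 hy)⟩, ⟨w, hw⟩))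
    (by simp [hyw, mul_assoc])
  exact (congrArg (fun p => (p.1 : X)) hxy : x = y) ▸ hy

end

theorem stmt13_general {X : Type*} [Group X] [Finite X] (n : ℕ) (hn : 2 ≤ n)
    (a b c : X)
    (ha : orderOf a = 4 * n) (hb : orderOf b = 2)
    (hab : b⁻¹ * a * b = a ^ (2 * n - 1))
    (hprod : (closure ({a, b} : Set X) : Set X) * (zpowers c : Set X) = Set.univ)
    (hint : closure ({a, b} : Set X) ⊓ zpowers c = ⊥)
    (hcore : (zpowers c).normalCore = ⊥)
    (hanorm : (zpowers a).Normal) :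
    c ^ 2 ∈ Subgroup.normalizer ((closure ({a, b} : Set X) : Set X)) ∧
    (∀ M₂ : Subgroup X, (M₂ : Set X) = (zpowers (a ^ 2) : Set X) * (zpowers c : Set X) →
      b ∈ Subgroup.normalizer (M₂ : Set X) → (closure ({a, b} : Set X)).Normal) := by
  have ha4 : a ^ (4 * n) = 1 := ha ▸ pow_orderOf_eq_one a
  have hb2 : b * b = 1 := by rw [← pow_two, ← hb, pow_orderOf_eq_one]
  have hab' : b * a * b⁻¹ = a ^ (2 * n - 1) := by
    rwa [inv_eq_of_mul_eq_one_right hb2] at hab ⊢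
  obtain ⟨x, hx, d, hd, hbc⟩ := exists_conj_eq_mul_mul hanorm hb2
    (notMem_zpowers_of_conj_eq_pow hn ha hab) hprod hint
  have hdA := mem_centralizer_of_conj_eq_mul_mul hx hbc
  have hdc : Commute d c := by
    obtain ⟨k, rfl⟩ := mem_zpowers_iff.1 hd
    exact (Commute.refl c).zpow_left k
  have d_pow_eq_one {k : ℕ} (hk : (x ^ (2 * n)) ^ k = 1) : d ^ k = 1 :=
    eq_one_of_mem_zpowers_of_normalCore_eq_bot hprod hcore (pow_mem hd k)
      (Commute.pow_right (mem_centralizer_iff.1 hdA a (mem_zpowers a)) k)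
      (conj_pow_eq_inv hb2 (by omega) hab' hx hdA hbc hk)
  refine ⟨?_, fun M₂ hM₂ hbM₂ => ?_⟩
  · have hd2 : d ^ 2 = 1 := d_pow_eq_one <| by
      rw [← pow_mul, show 2 * n * 2 = 4 * n by ring]
      exact pow_eq_one_of_mem_zpowers hx ha4
    exact mem_normalizer_closure_pair_of_conj_eq hanorm (mul_mem hx (hanorm.conj_mem x hx c))
      (conj_sq_eq_of_conj_eq_mul_mul (mem_centralizer_iff.1 hdA x hx).symm hdc hd2 hbc)
  · have hx2 := mem_zpowers_sq_of_conj_eq_mul_mul hM₂ hbM₂ hint hx hd hbc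
    have hd1 : d = 1 := pow_one d ▸ d_pow_eq_one <| by
      rw [pow_one]
      exact pow_eq_one_of_mem_zpowers hx2 (by rw [← pow_mul, show 2 * (2 * n) = 4 * n by ring, ha4])
    have hcN := mem_normalizer_closure_pair_of_conj_eq hanorm hx (by rw [hbc, hd1, mul_one])
    exact normalizer_eq_top_iff.1 (eq_top_of_mul_eq_univ le_normalizer (zpowers_le.2 hcN) hprod)

theorem stmt13 {X : Type*} [Group X] [Finite X] (n m : ℕ) (hn : 2 ≤ n) (hm : 2 ≤ m)
    (a b c : X)
    (ha : orderOf a = 4 * n) (hb : orderOf b = 2)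
    (hab : b⁻¹ * a * b = a ^ (2 * n - 1))
    (hG : Nat.card (closure ({a, b} : Set X)) = 8 * n)
    (hc : orderOf c = m)
    (hprod : (closure ({a, b} : Set X) : Set X) * (zpowers c : Set X) = Set.univ)
    (hint : closure ({a, b} : Set X) ⊓ zpowers c = ⊥)
    (hcore : (zpowers c).normalCore = ⊥)
    (hM : ∃ M : Subgroup X, (M : Set X) = (zpowers a : Set X) * (zpowers c : Set X))
    (hanorm : (zpowers a).Normal) :
    c ^ 2 ∈ Subgroup.normalizer ((closure ({a, b} : Set X) : Set X)) ∧
    (∀ M₂ : Subgroup X, (M₂ : Set X) = (zpowers (a ^ 2) : Set X) * (zpowers c : Set X) →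
      b ∈ Subgroup.normalizer (M₂ : Set X) → (closure ({a, b} : Set X)).Normal) :=
  stmt13_general n hn a b c ha hb hab hprod hint hcore hanorm
end

section
/- Let X be a finite permutation group containing a regular subgroup isomorphic to SD_{8n} with n ≥ 3. If some (equivalently every) point stabilizer in X is cyclic and nontrivial, then X is imprimitive. -/
/-!
Suppose `X` is primitive. Then a point stabilizer is a maximal subgroup, and it is abelian. Two
distinct stabilizers generate `X` and both centralize their intersection, which is therefore
normal in `X` and, the action being faithful, trivial; so every nonidentity element fixes at most
one point. By Burnside's lemma exactly `|Ω| - 1` elements of `X` are then fixed-point-free, and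
the regular subgroup `G` already contains that many, so `G` is the identity together with all
fixed-point-free elements and is normal in `X`. Its center `Z` is characteristic in `G`, hence
normal in `X`, so the `Z`-orbits are blocks. In `SD_{8n}` the element `a ^ (2n)` is central and
`b` is not, so by regularity these blocks are neither points nor all of `Ω`.
-/

open MulAction

theorem Subgroup.center_eq_centralizer_of_closure_eq_top {G : Type*} [Group G] {s : Set G}
    (hs : Subgroup.closure s = ⊤) : Subgroup.center G = Subgroup.centralizer s := by
  rw [← Subgroup.centralizer_univ, ← Subgroup.coe_top, ← hs, Subgroup.centralizer_closure]

namespace IsSemidihedral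

variable {n : ℕ} {G : Type*} [Group G]

theorem center_ne_bot (hG : IsSemidihedral n G) (hn : 0 < n) : Subgroup.center G ≠ ⊥ := by
  obtain ⟨-, a, b, ha, -, hba, hgen⟩ := hG
  have hz : a ^ (2 * n) ≠ 1 := pow_ne_one_of_lt_orderOf (by omega) (by omega)
  refine (Subgroup.ne_bot_iff_exists_ne_one).mpr ⟨⟨a ^ (2 * n), ?_⟩, fun h ↦ hz congr($h.1)⟩
  have hexp : (2 * n - 1) * (2 * n) = 2 * n + 4 * n * (n - 1) := by
    obtain ⟨k, rfl⟩ : ∃ k, n = k + 1 := ⟨n - 1, by omega⟩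
    rw [show 2 * (k + 1) - 1 = 2 * k + 1 by omega, Nat.add_sub_cancel]
    ring
  have hbz : b⁻¹ * a ^ (2 * n) * b = a ^ (2 * n) := by
    have hconj : b⁻¹ * a ^ (2 * n) * b = (b⁻¹ * a * b) ^ (2 * n) := by
      simpa using (conj_pow (a := b⁻¹) (b := a) (i := 2 * n)).symm
    rw [hconj, hba, ← pow_mul, hexp, pow_add, pow_mul a (4 * n), ← ha, pow_orderOf_eq_one,
      one_pow, mul_one]
  rw [Subgroup.center_eq_centralizer_of_closure_eq_top hgen, Subgroup.mem_centralizer_iff]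
  rintro g (rfl | rfl)
  · exact (pow_mul_comm' g _).symm
  · conv_lhs => rw [← hbz]
    group

theorem center_ne_top (hG : IsSemidihedral n G) (hn : 2 ≤ n) : Subgroup.center G ≠ ⊤ := by
  obtain ⟨-, a, b, ha, -, hba, -⟩ := hG
  intro htop
  have hab : a * b = b * a := Subgroup.mem_center_iff.mp (htop ▸ Subgroup.mem_top b) a
  have : a ^ (2 * n - 2) * a = 1 * a := by
    rw [← pow_succ, show 2 * n - 2 + 1 = 2 * n - 1 by omega, ← hba, one_mul, mul_assoc, hab,
      inv_mul_cancel_left]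
  exact pow_ne_one_of_lt_orderOf (by omega) (by omega) (mul_right_cancel this)

end IsSemidihedral

namespace MulAction

variable {X Ω : Type*} [Group X] [MulAction X Ω]

theorem eq_bot_of_normal_of_le_stabilizer [FaithfulSMul X Ω] [IsPretransitive X Ω]
    {N : Subgroup X} [hN : N.Normal] {ω : Ω} (hle : N ≤ stabilizer X ω) : N = ⊥ := by
  refine (Subgroup.eq_bot_iff_forall N).mpr fun g hg ↦ eq_of_smul_eq_smul (α := Ω) fun ω' ↦ ?_
  obtain ⟨x, rfl⟩ := exists_smul_eq X ω ω'
  have hfix : (x⁻¹ * g * x) • ω = ω := hle (hN.conj_mem' g hg x)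
  rw [one_smul, ← inv_smul_eq_iff]
  simpa only [mul_smul] using hfix

theorem subsingleton_fixedBy_of_isMulCommutative [FaithfulSMul X Ω] [IsPreprimitive X Ω]
    (hcomm : ∀ ω : Ω, IsMulCommutative (stabilizer X ω)) {g : X} (hg : g ≠ 1) :
    (fixedBy Ω g).Subsingleton := by
  intro ω hω ω' hω'
  by_contra hne
  have : Nontrivial Ω := ⟨⟨ω, ω', hne⟩⟩
  have hcoatom := IsPreprimitive.isCoatom_stabilizer_of_isPreprimitive (G := X) (X := Ω)
  by_cases hle : stabilizer X ω' ≤ stabilizer X ω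
  · have heq : stabilizer X ω' = stabilizer X ω :=
      ((hcoatom ω').le_iff_eq (hcoatom ω).1).mp hle |>.symm
    obtain ⟨x, rfl⟩ := exists_smul_eq X ω ω'
    have hxN : x ∈ Subgroup.normalizer (stabilizer X ω : Set X) := by
      rw [Subgroup.mem_normalizer_iff_map_conj_eq]
      exact (stabilizer_smul_eq_stabilizer_map_conj x ω).symm.trans heq
    have hnormal : (stabilizer X ω).Normal := by
      rw [← Subgroup.normalizer_eq_top_iff]
      refine (hcoatom ω).2 _ (Subgroup.le_normalizer.lt_of_ne fun h ↦ hne ?_)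
      exact (mem_stabilizer_iff.mp (h.symm ▸ hxN : x ∈ stabilizer X ω)).symm
    exact hg ((Subgroup.eq_bot_iff_forall _).mp (eq_bot_of_normal_of_le_stabilizer le_rfl) g hω)
  · have hsup : stabilizer X ω ⊔ stabilizer X ω' = ⊤ :=
      (hcoatom ω).2 _ (left_lt_sup.mpr hle)
    set K := stabilizer X ω ⊓ stabilizer X ω'
    have hcentral : ∀ ω₀ : Ω, K ≤ stabilizer X ω₀ → stabilizer X ω₀ ≤ Subgroup.centralizer K :=
      fun ω₀ hK ↦ ((Subgroup.le_centralizer_iff_isMulCommutative.mpr (hcomm ω₀)).trans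
        (Subgroup.centralizer_le hK))
    have hnormal : K.Normal := by
      rw [← Subgroup.normalizer_eq_top_iff, eq_top_iff, ← hsup]
      exact (sup_le (hcentral ω inf_le_left) (hcentral ω' inf_le_right)).trans
        (Subgroup.centralizer_le_normalizer _)
    exact hg ((Subgroup.eq_bot_iff_forall _).mp (eq_bot_of_normal_of_le_stabilizer
      (inf_le_left : K ≤ stabilizer X ω)) g ⟨hω, hω'⟩)

theorem card_fixedPointFree_add_one [Finite X] [Finite Ω] [Nonempty Ω] [IsPretransitive X Ω]
    (hfix : ∀ g : X, g ≠ 1 → (fixedBy Ω g).Subsingleton) :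
    {g : X | ∀ ω : Ω, g • ω ≠ ω}.ncard + 1 = Nat.card Ω := by
  classical
  have := Fintype.ofFinite X
  have := Fintype.ofFinite Ω
  have horbits : Fintype.card (orbitRel.Quotient X Ω) = 1 := by
    have := (pretransitive_iff_subsingleton_quotient X Ω).mp ‹_›
    have := uniqueOfSubsingleton (Quotient.mk (orbitRel X Ω) (Classical.arbitrary Ω))
    exact Fintype.card_unique
  have hpoint (g : X) : Fintype.card (fixedBy Ω g) + (if ∀ ω : Ω, g • ω ≠ ω then 1 else 0) +
      (if g = 1 then 1 else 0) = 1 + if g = 1 then Fintype.card Ω else 0 := by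
    by_cases hg : g = 1
    · subst hg
      have : ¬ ∀ ω : Ω, (1 : X) • ω ≠ ω := fun h ↦ h (Classical.arbitrary Ω) (one_smul _ _)
      simp only [this, if_true, if_false, fixedBy_one_eq_univ, Fintype.card_setUniv]
      omega
    have hle : Fintype.card (fixedBy Ω g) ≤ 1 :=
      Fintype.card_le_one_iff_subsingleton.mpr (hfix g hg).coe_sort
    by_cases hfree : ∀ ω : Ω, g • ω ≠ ω
    · have : Fintype.card (fixedBy Ω g) = 0 :=
        Fintype.card_eq_zero_iff.mpr ⟨fun ⟨ω, hω⟩ ↦ hfree ω hω⟩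
      simp [hfree, hg, this]
    · obtain ⟨ω, hω⟩ := not_forall_not.mp hfree
      have : 0 < Fintype.card (fixedBy Ω g) := Fintype.card_pos_iff.mpr ⟨⟨ω, hω⟩⟩
      simp only [hfree, hg, if_false]
      omega
  have hsum := Finset.sum_congr rfl fun g (_ : g ∈ Finset.univ) ↦ hpoint g
  simp only [Finset.sum_add_distrib, Finset.sum_ite_eq', Finset.mem_univ, if_true] at hsum
  simp only [sum_card_fixedBy_eq_card_orbits_mul_card_group, horbits, Finset.sum_boole,
    Finset.sum_const, Finset.card_univ, smul_eq_mul, Nat.cast_id] at hsum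
  rw [Set.ncard_eq_toFinset_card', Set.toFinset_ofPred, Nat.card_eq_fintype_card]
  omega

theorem eq_one_of_smul_eq_self_of_regular {G : Subgroup X}
    (hreg : ∀ α β : Ω, ∃! g : G, (g : X) • α = β) {g : G} {ω : Ω} (h : (g : X) • ω = ω) : g = 1 :=
  (hreg ω ω).unique h (one_smul X ω)

theorem nat_card_eq_of_regular {G : Subgroup X} (hreg : ∀ α β : Ω, ∃! g : G, (g : X) • α = β)
    (α : Ω) : Nat.card G = Nat.card Ω :=
  Nat.card_eq_of_bijective (fun g : G ↦ (g : X) • α)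
    ⟨fun _ _ h ↦ (hreg α _).unique h rfl, fun β ↦ (hreg α β).exists⟩

theorem mem_of_forall_smul_ne_of_regular [Finite X] [Nonempty Ω] [IsPretransitive X Ω]
    {G : Subgroup X} (hreg : ∀ α β : Ω, ∃! g : G, (g : X) • α = β)
    (hfix : ∀ g : X, g ≠ 1 → (fixedBy Ω g).Subsingleton) {x : X} (hx : ∀ ω : Ω, x • ω ≠ ω) :
    x ∈ G := by
  have α : Ω := Classical.arbitrary Ω
  have : Finite Ω := Finite.of_surjective (· • α) (exists_smul_eq X α)
  have hsub : (G : Set X) \ {1} ⊆ {g : X | ∀ ω : Ω, g • ω ≠ ω} := fun g ⟨hg, hg1⟩ ω hω ↦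
    hg1 congr($(eq_one_of_smul_eq_self_of_regular hreg (g := ⟨g, hg⟩) hω).1)
  have hcard : ((G : Set X) \ {1}).ncard = Nat.card Ω - 1 := by
    rw [Set.ncard_sdiff_singleton_of_mem G.one_mem, ← nat_card_eq_of_regular hreg α]
    rfl
  have heq := Set.eq_of_subset_of_ncard_le hsub
    (by have := card_fixedPointFree_add_one hfix; omega) (Set.toFinite _)
  exact (heq ▸ hx : x ∈ (G : Set X) \ {1}).1

theorem normal_of_regular [Finite X] [Nonempty Ω] [IsPretransitive X Ω]
    {G : Subgroup X} (hreg : ∀ α β : Ω, ∃! g : G, (g : X) • α = β)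
    (hfix : ∀ g : X, g ≠ 1 → (fixedBy Ω g).Subsingleton) : G.Normal := by
  refine ⟨fun g hg x ↦ ?_⟩
  by_cases hg1 : g = 1
  · simp [hg1]
  refine mem_of_forall_smul_ne_of_regular hreg hfix fun ω hω ↦ hg1 ?_
  have : g • x⁻¹ • ω = x⁻¹ • ω := by
    rw [eq_inv_smul_iff]; simpa only [mul_smul] using hω
  exact congr($(eq_one_of_smul_eq_self_of_regular hreg (g := ⟨g, hg⟩) this).1)

theorem exists_isBlock_of_regular {G : Subgroup X} [G.Normal]
    (hreg : ∀ α β : Ω, ∃! g : G, (g : X) • α = β) (α : Ω) (C : Subgroup G) [C.Characteristic]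
    (hbot : C ≠ ⊥) (htop : C ≠ ⊤) :
    ∃ B : Set Ω, IsBlock X B ∧ B.Nontrivial ∧ B ≠ Set.univ := by
  refine ⟨orbit (C.map G.subtype) α, IsBlock.orbit_of_normal α, ?_, fun huniv ↦ ?_⟩
  · obtain ⟨c, hc⟩ := Subgroup.ne_bot_iff_exists_ne_one.mp hbot
    refine ⟨((c : G) : X) • α, ⟨⟨c, c, c.2, rfl⟩, rfl⟩, α, mem_orbit_self α, fun h ↦ hc ?_⟩
    exact Subtype.ext (eq_one_of_smul_eq_self_of_regular hreg h)
  · obtain ⟨g, -, hg⟩ := SetLike.exists_of_lt (lt_top_iff_ne_top.mpr htop)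
    obtain ⟨⟨-, c, hc, rfl⟩, hcg⟩ := huniv.symm ▸ Set.mem_univ ((g : X) • α)
    exact hg ((hreg α _).unique hcg rfl ▸ hc)

end MulAction

theorem stmt19 {X Ω : Type*} [Group X] [Finite X] [MulAction X Ω]
    (hfaith : ∀ g : X, (∀ ω : Ω, g • ω = ω) → g = 1)
    (htrans : MulAction.IsPretransitive X Ω)
    (n : ℕ) (hn : 3 ≤ n) (G : Subgroup X) (hSD : IsSemidihedral n G)
    (hreg : ∀ α β : Ω, ∃! g : G, (g : X) • α = β)
    (hstab : ∀ α : Ω, IsCyclic (MulAction.stabilizer X α) ∧ MulAction.stabilizer X α ≠ ⊥) :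
    ∃ B : Set Ω, MulAction.IsBlock X B ∧ B.Nontrivial ∧ B ≠ Set.univ := by
  have := htrans
  have : FaithfulSMul X Ω := ⟨fun hgh ↦ mul_inv_eq_one.mp (hfaith _ fun ω ↦
    by rw [mul_smul, hgh, smul_inv_smul])⟩
  have hZbot := hSD.center_ne_bot (by omega)
  obtain ⟨c, hc⟩ := Subgroup.ne_bot_iff_exists_ne_one.mp hZbot
  obtain ⟨α, -⟩ : ∃ α : Ω, ((c : G) : X) • α ≠ α :=
    not_forall.mp (mt (hfaith _) (by simpa using hc))
  have : Nonempty Ω := ⟨α⟩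
  by_contra hprim
  have : IsPreprimitive X Ω := ⟨fun {B} hB ↦ or_iff_not_imp_left.mpr fun hsub ↦
    not_not.mp fun hne ↦ hprim ⟨B, hB, Set.not_subsingleton_iff.mp hsub, hne⟩⟩
  have hfix (g : X) (hg : g ≠ 1) : (fixedBy Ω g).Subsingleton :=
    subsingleton_fixedBy_of_isMulCommutative (fun ω ↦ have := (hstab ω).1; inferInstance) hg
  have : G.Normal := normal_of_regular hreg hfix
  exact hprim (exists_isBlock_of_regular hreg α (Subgroup.center G) hZbot
    (hSD.center_ne_top (by omega)))
end
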